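/- arXiv:2203.06353 — 6 statements merged into one kernel-verified Lean document; each statement's English description precedes it below -/
import Mathlib

section
/- Let (≿_i)_{i∈N} be a profile of dichotomous preferences with acceptable sets A_i ⊆ X, and for x ∈ X let A_x = {i ∈ N : x ∈ A_i}. Call outcomes x, y equivalent if A_x = A_y. Then any set of pairwise non-equivalent Pareto optimal outcomes has cardinality at most the binomial coefficient C(|N|, ⌊|N|/2⌋). -/
/-! Under dichotomous preferences, `x` is Pareto dominated by any outcome accepted by a strict
superset of the agents accepting `x`. So the acceptor sets of pairwise non-equivalent Pareto
optimal outcomes are distinct and form an antichain of subsets of `N`, and Sperner's theorem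
bounds their number. -/

attribute [local instance] Classical.propDecidable

/-- The strict part of a preference relation. -/
def strictPref {X : Type*} (r : X → X → Prop) (x y : X) : Prop := r x y ∧ ¬ r y x

/-- A preference: a complete (total) and transitive binary relation. -/
def IsPrefOrder {X : Type*} (r : X → X → Prop) : Prop :=
  (∀ x y, r x y ∨ r y x) ∧ Transitive r

/-- A lottery over the finite set of outcomes `X`. -/
def IsLottery {X : Type*} [Fintype X] (p : X → ℝ) : Prop :=
  (∀ x, 0 ≤ p x) ∧ ∑ x, p x = 1

/-- Total weight a lottery `p` places on outcomes strictly preferred to `x`. -/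
noncomputable def upWeight {X : Type*} [Fintype X] (r : X → X → Prop) (p : X → ℝ) (x : X) : ℝ :=
  ∑ y ∈ Finset.univ.filter (fun y => strictPref r y x), p y

/-- First-order stochastic dominance (weak): `p ≿ q`. -/
def SDge {X : Type*} [Fintype X] (r : X → X → Prop) (p q : X → ℝ) : Prop :=
  ∀ x, upWeight r q x ≤ upWeight r p x

/-- First-order stochastic dominance (strict): `p ≻ q`. -/
def SDgt {X : Type*} [Fintype X] (r : X → X → Prop) (p q : X → ℝ) : Prop :=
  SDge r p q ∧ ∃ x, upWeight r q x < upWeight r p x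

/-- A lottery `p` is ex-ante efficient if no lottery weakly SD-dominates it for all agents
and strictly for some agent. -/
def ExAnteEff {X N : Type*} [Fintype X] (pref : N → X → X → Prop) (p : X → ℝ) : Prop :=
  ¬ ∃ q : X → ℝ, IsLottery q ∧ (∀ i, SDge (pref i) q p) ∧ ∃ j, SDgt (pref j) q p

/-- An outcome is Pareto optimal if no outcome is weakly better for all agents and
strictly better for some agent. -/
def ParetoOptimal {X N : Type*} (pref : N → X → X → Prop) (x : X) : Prop :=
  ¬ ∃ y, (∀ i, pref i y x) ∧ ∃ j, strictPref (pref j) y x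

/-- A lottery is ex-post efficient if it is supported on Pareto optimal outcomes. -/
def ExPostEff {X N : Type*} [Fintype X] (pref : N → X → X → Prop) (p : X → ℝ) : Prop :=
  ∀ x, 0 < p x → ParetoOptimal pref x

/-- `u` is a utility representation of the preference `r`. -/
def Represents {X : Type*} (u : X → ℝ) (r : X → X → Prop) : Prop :=
  ∀ x y, (u y ≤ u x ↔ r x y)

/-- A preference is dichotomous with set `A` of acceptable outcomes. -/
def Dichotomous {X : Type*} (r : X → X → Prop) (A : Set X) : Prop :=
  ∀ x y, r x y ↔ (x ∈ A ∨ y ∉ A)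

theorem Dichotomous.strictPref_iff {X : Type*} {r : X → X → Prop} {A : Set X}
    (h : Dichotomous r A) (x y : X) : strictPref r x y ↔ x ∈ A ∧ y ∉ A := by
  simp only [strictPref, h x y, h y x]
  tauto

theorem not_paretoOptimal_of_ssubset {X N : Type*} {pref : N → X → X → Prop} {A : N → Set X}
    (hpref : ∀ i, Dichotomous (pref i) (A i)) {x y : X}
    (hxy : {i | x ∈ A i} ⊂ {i | y ∈ A i}) : ¬ ParetoOptimal pref x := by
  obtain ⟨j, hjy, hjx⟩ := Set.exists_of_ssubset hxy
  refine not_not_intro ⟨y, fun i => (hpref i y x).2 ?_, j,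
    ((hpref j).strictPref_iff y x).2 ⟨hjy, hjx⟩⟩
  by_cases hxi : x ∈ A i
  · exact .inl (hxy.subset hxi)
  · exact .inr hxi

noncomputable def acceptors {X N : Type*} [Fintype N] (A : N → Set X) (x : X) : Finset N :=
  Finset.univ.filter (x ∈ A ·)

@[simp]
theorem coe_acceptors {X N : Type*} [Fintype N] (A : N → Set X) (x : X) :
    (acceptors A x : Set N) = {i | x ∈ A i} := by
  ext i
  simp [acceptors]

theorem isAntichain_acceptors_image {X N : Type*} [Fintype N] {pref : N → X → X → Prop}
    {A : N → Set X} (hpref : ∀ i, Dichotomous (pref i) (A i)) (Y : Finset X)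
    (hYpo : ∀ x ∈ Y, ParetoOptimal pref x) :
    IsAntichain (· ⊆ ·) (SetLike.coe (Y.image (acceptors A))) := by
  rintro _ hx _ hy hne hsub
  obtain ⟨x, hxY, rfl⟩ := Finset.mem_image.1 hx
  obtain ⟨y, -, rfl⟩ := Finset.mem_image.1 hy
  have hxy : acceptors A x ⊂ acceptors A y := hsub.ssubset_of_ne hne
  rw [← Finset.coe_ssubset, coe_acceptors, coe_acceptors] at hxy
  exact not_paretoOptimal_of_ssubset hpref hxy (hYpo x hxY)

theorem stmt_14_general {X N : Type*} [Fintype N]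
    (pref : N → X → X → Prop) (A : N → Set X)
    (hpref : ∀ i, Dichotomous (pref i) (A i))
    (Y : Finset X) (hYpo : ∀ x ∈ Y, ParetoOptimal pref x)
    (hYne : ∀ x ∈ Y, ∀ y ∈ Y, x ≠ y → {i : N | x ∈ A i} ≠ {i : N | y ∈ A i}) :
    Y.card ≤ Nat.choose (Fintype.card N) (Fintype.card N / 2) := by
  have hinj : Set.InjOn (acceptors A) Y := fun x hx y hy hxy => by
    by_contra hne
    exact hYne x hx y hy hne (by simpa using congrArg ((↑) : Finset N → Set N) hxy)
  rw [← Finset.card_image_of_injOn hinj]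
  exact (isAntichain_acceptors_image hpref Y hYpo).sperner

/-- With dichotomous preferences, any set of pairwise non-equivalent Pareto
optimal outcomes has at most `C(|N|, ⌊|N|/2⌋)` elements. -/
theorem stmt_14 {X N : Type*} [Fintype X] [Nonempty X] [Fintype N] [Nonempty N]
    (pref : N → X → X → Prop) (A : N → Set X)
    (hpref : ∀ i, Dichotomous (pref i) (A i))
    (Y : Finset X) (hYpo : ∀ x ∈ Y, ParetoOptimal pref x)
    (hYne : ∀ x ∈ Y, ∀ y ∈ Y, x ≠ y → {i : N | x ∈ A i} ≠ {i : N | y ∈ A i}) :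
    Y.card ≤ Nat.choose (Fintype.card N) (Fintype.card N / 2) :=
  stmt_14_general pref A hpref Y hYpo hYne
end

section
/- Let (≿_i)_{i∈N} be a profile of dichotomous preferences, and identify each outcome x ∈ X with the vector x ∈ {0,1}^N where x_i = 1 iff x is acceptable to agent i. Then every ex-post efficient lottery is ex-ante efficient if and only if there exists a vector λ ∈ ℝ^N with λ_i > 0 for all i ∈ N such that the dot product ∑_{i∈N} λ_i x_i takes the same value for all Pareto optimal outcomes x. -/
attribute [local instance] Classical.propDecidable

/-! Under dichotomous preferences, SD-dominance for agent `i` just means a larger probability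
`mass (A i) ·` of an acceptable outcome.

If `λ > 0` makes `score λ A x = ∑ i, λ i * [x ∈ A i]` equal to `c` on Pareto optimal outcomes, then,
since every outcome is weakly Pareto dominated by a Pareto optimal one, the welfare
`∑ i, λ i * mass (A i) p = ∑ x, p x * score λ A x` is at most `c` for every lottery and equals `c`
for ex-post efficient ones, while domination strictly increases it.

Conversely, let `V` be the space of combinations `∑ x, t x • acceptVec A x` with `t` of total
mass zero and supported on Pareto optimal outcomes. Splitting `t` into its positive and negative
parts writes it as `s • (q - r)` with `s > 0` and lotteries `q`, `r`, where `r` is ex-post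
efficient; if the combination is nonnegative and nonzero, `q` dominates `r`. So when ex-post
efficiency implies ex-ante efficiency, `V` meets the nonnegative orthant only in `0`, and Stiemke's
lemma (Hahn–Banach against the standard simplex) yields `λ > 0` orthogonal to `V`: `score λ A` is
constant on Pareto optimal outcomes. -/

open Finset

theorem exists_pos_dotProduct_eq_zero_of_nonneg_eq_zero {n : Type*} [Fintype n]
    (V : Submodule ℝ (n → ℝ)) (hV : ∀ w ∈ V, 0 ≤ w → w = 0) :
    ∃ lam : n → ℝ, (∀ i, 0 < lam i) ∧ ∀ w ∈ V, lam ⬝ᵥ w = 0 := by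
  have hdisj : Disjoint (V : Set (n → ℝ)) (stdSimplex ℝ n) := by
    refine Set.disjoint_left.2 fun w hwV hwS => ?_
    have := hwS.2
    simp [hV w hwV hwS.1] at this
  obtain ⟨f, u, v, hfV, huv, hfS⟩ :=
    geometric_hahn_banach_closed_compact V.convex V.closed_of_finiteDimensional
      (convex_stdSimplex ℝ n) (isCompact_stdSimplex ℝ n) hdisj
  -- a linear functional bounded above on a subspace vanishes on it
  have hf : ∀ w ∈ V, f w = 0 := by
    intro w hw
    by_contra hne
    have := hfV _ (V.smul_mem ((|u| + 1) / f w) hw)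
    rw [map_smul, smul_eq_mul, div_mul_cancel₀ _ hne] at this
    linarith [le_abs_self u]
  have hu : 0 < u := by simpa using hfV 0 V.zero_mem
  refine ⟨fun i => f (if i = · then 1 else 0), fun i => ?_, fun w hw => ?_⟩
  · linarith [hfS _ (ite_eq_mem_stdSimplex ℝ i)]
  · have := f.toLinearMap.pi_apply_eq_sum_univ w
    rw [ContinuousLinearMap.coe_coe, hf w hw] at this
    simpa [dotProduct, mul_comm] using this.symm

noncomputable def mass {X : Type*} [Fintype X] (A : Set X) (p : X → ℝ) : ℝ :=
  ∑ x, A.indicator p x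

lemma IsLottery.mass_univ {X : Type*} [Fintype X] {p : X → ℝ} (hp : IsLottery p) :
    mass Set.univ p = 1 := by
  simp [mass, hp.2]

namespace Dichotomous

variable {X : Type*} {r : X → X → Prop} {A : Set X}

lemma strictPref_iff_s15 (h : Dichotomous r A) {x y : X} : strictPref r y x ↔ y ∈ A ∧ x ∉ A := by
  rw [strictPref, h, h]
  tauto

variable [Fintype X] {p q : X → ℝ}

lemma upWeight_eq (h : Dichotomous r A) (p : X → ℝ) (x : X) :
    upWeight r p x = if x ∈ A then 0 else mass A p := by
  rw [upWeight, sum_filter, mass]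
  split_ifs with hx <;> simp [h.strictPref_iff_s15, hx, Set.indicator_apply]

lemma sdge_iff (h : Dichotomous r A) (hp : IsLottery p) (hq : IsLottery q) :
    SDge r q p ↔ mass A p ≤ mass A q := by
  by_cases hA : ∃ x, x ∉ A
  · obtain ⟨x, hx⟩ := hA
    refine ⟨fun hpq => by simpa [h.upWeight_eq, hx] using hpq x, fun hpq y => ?_⟩
    by_cases hy : y ∈ A <;> simp [h.upWeight_eq, hy, hpq]
  · obtain rfl : A = Set.univ := Set.eq_univ_of_forall (by simpa using hA)
    simp [SDge, h.upWeight_eq, hp.mass_univ, hq.mass_univ]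

lemma sdgt_iff (h : Dichotomous r A) (hp : IsLottery p) (hq : IsLottery q) :
    SDgt r q p ↔ mass A p < mass A q := by
  by_cases hA : ∃ x, x ∉ A
  · obtain ⟨x, hx⟩ := hA
    rw [SDgt, h.sdge_iff hp hq]
    refine ⟨fun ⟨_, y, hy⟩ => ?_, fun hpq => ⟨hpq.le, x, by simpa [h.upWeight_eq, hx] using hpq⟩⟩
    by_cases hyA : y ∈ A <;> simp_all [h.upWeight_eq]
  · obtain rfl : A = Set.univ := Set.eq_univ_of_forall (by simpa using hA)
    simp [SDgt, SDge, h.upWeight_eq, hp.mass_univ, hq.mass_univ]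

end Dichotomous

section Acceptance

variable {X N : Type*} [Fintype N] {pref : N → X → X → Prop} {A : N → Set X}
  {lam : N → ℝ}

noncomputable def accepters (A : N → Set X) (x : X) : Finset N := univ.filter (x ∈ A ·)

@[simp]
lemma mem_accepters {x : X} {i : N} : i ∈ accepters A x ↔ x ∈ A i := by
  simp [accepters]

noncomputable def score (lam : N → ℝ) (A : N → Set X) (x : X) : ℝ :=
  ∑ i, if x ∈ A i then lam i else 0

lemma score_mono (hlam : ∀ i, 0 ≤ lam i) {x y : X} (h : accepters A x ⊆ accepters A y) :
    score lam A x ≤ score lam A y := by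
  refine sum_le_sum fun i _ => ?_
  have := @h i
  simp only [mem_accepters] at this
  split_ifs <;> simp_all

noncomputable def acceptVec (A : N → Set X) (x : X) : N → ℝ := fun i => if x ∈ A i then 1 else 0

lemma dotProduct_acceptVec (lam : N → ℝ) (x : X) :
    lam ⬝ᵥ acceptVec A x = score lam A x := by
  simp [dotProduct, acceptVec, score]

lemma paretoOptimal_iff_forall_not_ssubset (hpref : ∀ i, Dichotomous (pref i) (A i)) (x : X) :
    ParetoOptimal pref x ↔ ∀ y, ¬ accepters A x ⊂ accepters A y := by
  simp only [ParetoOptimal, (hpref _).strictPref_iff_s15, hpref _ _ _, Finset.ssubset_def,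
    Finset.subset_iff, mem_accepters]
  grind

lemma exists_paretoOptimal_accepters_subset [Fintype X]
    (hpref : ∀ i, Dichotomous (pref i) (A i)) (x : X) :
    ∃ y, ParetoOptimal pref y ∧ accepters A x ⊆ accepters A y := by
  obtain ⟨y, hxy, hmax⟩ := (univ.filter (accepters A x ⊆ accepters A ·)).exists_max_image
    (fun y => #(accepters A y)) ⟨x, by simp⟩
  simp only [mem_filter, mem_univ, true_and] at hxy hmax
  refine ⟨y, (paretoOptimal_iff_forall_not_ssubset hpref y).2 fun z hyz => ?_, hxy⟩
  exact (hmax z (hxy.trans hyz.subset)).not_gt (card_lt_card hyz)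

end Acceptance

section Welfare

variable {X N : Type*} [Fintype X] [Fintype N] {pref : N → X → X → Prop} {A : N → Set X}
  {lam : N → ℝ}

lemma sum_mul_mass_eq_sum_mul_score (lam : N → ℝ) (A : N → Set X) (p : X → ℝ) :
    ∑ i, lam i * mass (A i) p = ∑ x, p x * score lam A x := by
  simp only [mass, score, mul_sum, Set.indicator_apply, mul_ite, mul_zero]
  rw [sum_comm]
  exact sum_congr rfl fun x _ => sum_congr rfl fun i _ => by rw [mul_comm]

lemma sum_mul_mass_lt_of_sdge_of_sdgt (hpref : ∀ i, Dichotomous (pref i) (A i))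
    (hlam : ∀ i, 0 < lam i) {p q : X → ℝ} (hp : IsLottery p) (hq : IsLottery q)
    (hge : ∀ i, SDge (pref i) q p) {j : N} (hgt : SDgt (pref j) q p) :
    ∑ i, lam i * mass (A i) p < ∑ i, lam i * mass (A i) q := by
  refine sum_lt_sum (fun i _ => ?_) ⟨j, mem_univ j, ?_⟩
  · exact mul_le_mul_of_nonneg_left (((hpref i).sdge_iff hp hq).1 (hge i)) (hlam i).le
  · exact mul_lt_mul_of_pos_left (((hpref j).sdgt_iff hp hq).1 hgt) (hlam j)

theorem exAnteEff_of_score_eq (hpref : ∀ i, Dichotomous (pref i) (A i)) (hlam : ∀ i, 0 < lam i)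
    {c : ℝ} (hc : ∀ x, ParetoOptimal pref x → score lam A x = c) {p : X → ℝ} (hp : IsLottery p)
    (hpe : ExPostEff pref p) : ExAnteEff pref p := by
  rintro ⟨q, hq, hge, j, hgt⟩
  have hle : ∀ x, score lam A x ≤ c := fun x => by
    obtain ⟨y, hy, hxy⟩ := exists_paretoOptimal_accepters_subset hpref x
    exact (hc y hy) ▸ score_mono (fun i => (hlam i).le) hxy
  have hp_eq : ∑ x, p x * score lam A x = c := by
    rw [← mul_one c, ← hp.2, mul_sum]
    refine sum_congr rfl fun x _ => ?_
    rcases (hp.1 x).eq_or_lt with h | h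
    · simp [← h]
    · rw [hc x (hpe x h), mul_comm]
  have hq_le : ∑ x, q x * score lam A x ≤ c := calc
    _ ≤ ∑ x, q x * c := sum_le_sum fun x _ => mul_le_mul_of_nonneg_left (hle x) (hq.1 x)
    _ = c := by rw [← sum_mul, hq.2, one_mul]
  have := sum_mul_mass_lt_of_sdge_of_sdgt (lam := lam) hpref hlam hp hq hge hgt
  rw [sum_mul_mass_eq_sum_mul_score, sum_mul_mass_eq_sum_mul_score] at this
  linarith

end Welfare

section SignedMixtures

variable {X : Type*} [Fintype X]

def zeroSumOn (S : Set X) : Submodule ℝ (X → ℝ) where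
  carrier := {t | (∀ x ∉ S, t x = 0) ∧ ∑ x, t x = 0}
  zero_mem' := by simp
  add_mem' := by
    rintro t t' ⟨hS, h0⟩ ⟨hS', h0'⟩
    exact ⟨fun x hx => by simp [hS x hx, hS' x hx], by simp [sum_add_distrib, h0, h0']⟩
  smul_mem' := by
    rintro c t ⟨hS, h0⟩
    exact ⟨fun x hx => by simp [hS x hx], by simp [← mul_sum, h0]⟩

lemma single_sub_single_mem_zeroSumOn {S : Set X} {x y : X} (hx : x ∈ S) (hy : y ∈ S) :
    Pi.single x 1 - Pi.single y 1 ∈ zeroSumOn S := by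
  refine ⟨fun z hz => ?_, by simp [sum_sub_distrib]⟩
  have hzx : z ≠ x := by rintro rfl; exact hz hx
  have hzy : z ≠ y := by rintro rfl; exact hz hy
  simp [hzx, hzy]

lemma exists_smul_lottery_sub_lottery {t : X → ℝ} (ht : ∑ x, t x = 0) (ht0 : t ≠ 0) :
    ∃ s : ℝ, 0 < s ∧ ∃ q r : X → ℝ, IsLottery q ∧ IsLottery r ∧ (∀ x, 0 < r x → t x < 0) ∧
      t = s • (q - r) := by
  set s := ∑ x, (t x)⁺
  have hs : 0 < s := by
    refine (sum_nonneg fun x _ => posPart_nonneg (t x)).lt_of_ne fun hs => ht0 ?_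
    have hneg : ∀ x ∈ univ, t x ≤ 0 := fun x _ =>
      posPart_eq_zero.1 ((sum_eq_zero_iff_of_nonneg fun x _ => posPart_nonneg _).1 hs.symm x
        (mem_univ x))
    funext x
    exact (sum_eq_zero_iff_of_nonpos hneg).1 ht x (mem_univ x)
  have hs' : ∑ x, (t x)⁻ = s := by
    have := sum_sub_distrib (fun x => (t x)⁺) (fun x => (t x)⁻) (s := univ)
    simp only [posPart_sub_negPart, ht] at this
    linarith
  refine ⟨s, hs, fun x => (t x)⁺ / s, fun x => (t x)⁻ / s,
    ⟨fun x => by positivity, by rw [← sum_div, div_self hs.ne']⟩,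
    ⟨fun x => by positivity, by rw [← sum_div, hs', div_self hs.ne']⟩, fun x hx => ?_, ?_⟩
  · by_contra! htx
    simp [negPart_eq_zero.2 htx] at hx
  · funext x
    simp [mul_sub, mul_div_cancel₀ _ hs.ne', posPart_sub_negPart]

end SignedMixtures

section Efficiency

variable {X N : Type*} [Fintype X] {pref : N → X → X → Prop} {A : N → Set X}

lemma linearCombination_acceptVec_apply (p : X → ℝ) (i : N) :
    Fintype.linearCombination ℝ (acceptVec A) p i = mass (A i) p := by
  simp [Fintype.linearCombination_apply, acceptVec, mass, Set.indicator_apply]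

theorem eq_zero_of_nonneg_of_forall_exAnteEff (hpref : ∀ i, Dichotomous (pref i) (A i))
    (H : ∀ p : X → ℝ, IsLottery p → ExPostEff pref p → ExAnteEff pref p) :
    ∀ w ∈ (zeroSumOn {x | ParetoOptimal pref x}).map (Fintype.linearCombination ℝ (acceptVec A)),
      0 ≤ w → w = 0 := by
  rintro _ ⟨t, ⟨htS, ht0⟩, rfl⟩ hw
  by_contra hne
  obtain ⟨s, hs, q, r, hq, hr, hrt, rfl⟩ :=
    exists_smul_lottery_sub_lottery ht0 (by rintro rfl; simp at hne)
  have hmass : ∀ i, Fintype.linearCombination ℝ (acceptVec A) (s • (q - r)) i =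
      s * mass (A i) q - s * mass (A i) r := fun i => by
    rw [map_smul, map_sub, Pi.smul_apply, Pi.sub_apply, linearCombination_acceptVec_apply,
      linearCombination_acceptVec_apply, smul_eq_mul, mul_sub]
  obtain ⟨j, hj⟩ := (Pi.lt_def.1 (hw.lt_of_ne (Ne.symm hne))).2
  simp only [Pi.le_def, Pi.zero_apply, hmass] at hw hj
  refine H r hr (fun x hx => ?_) ⟨q, hq, fun i => ?_, j, ?_⟩
  · by_contra hxS
    simpa [htS x hxS] using hrt x hx
  · exact ((hpref i).sdge_iff hr hq).2 (le_of_mul_le_mul_left (by linarith [hw i]) hs)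
  · exact ((hpref j).sdgt_iff hr hq).2 (lt_of_mul_lt_mul_left (by linarith) hs.le)

end Efficiency

theorem stmt_15_general {X N : Type*} [Fintype X] [Nonempty X] [Fintype N]
    (pref : N → X → X → Prop) (A : N → Set X)
    (hpref : ∀ i, Dichotomous (pref i) (A i)) :
    (∀ p : X → ℝ, IsLottery p → ExPostEff pref p → ExAnteEff pref p) ↔
      ∃ lam : N → ℝ, (∀ i, 0 < lam i) ∧
        ∃ c : ℝ, ∀ x, ParetoOptimal pref x →
          (∑ i, if x ∈ A i then lam i else 0) = c := by
  constructor
  · intro H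
    obtain ⟨lam, hlam, horth⟩ := exists_pos_dotProduct_eq_zero_of_nonneg_eq_zero _
      (eq_zero_of_nonneg_of_forall_exAnteEff hpref H)
    obtain ⟨x₀, hx₀, -⟩ := exists_paretoOptimal_accepters_subset hpref (Classical.arbitrary X)
    refine ⟨lam, hlam, score lam A x₀, fun x hx => ?_⟩
    have := horth _ ⟨_, single_sub_single_mem_zeroSumOn hx hx₀, rfl⟩
    rw [map_sub, Fintype.linearCombination_apply_single, Fintype.linearCombination_apply_single,
      one_smul, one_smul, dotProduct_sub, dotProduct_acceptVec, dotProduct_acceptVec,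
      sub_eq_zero] at this
    exact this
  · rintro ⟨lam, hlam, c, hc⟩ p hp hpe
    exact exAnteEff_of_score_eq hpref hlam hc hp hpe

/-- With dichotomous preferences, every ex-post efficient lottery is ex-ante
efficient iff there is a strictly positive vector `lam` whose dot product with (the 0-1
vector of) each Pareto optimal outcome is constant. -/
theorem stmt_15 {X N : Type*} [Fintype X] [Nonempty X] [Fintype N] [Nonempty N]
    (pref : N → X → X → Prop) (A : N → Set X)
    (hpref : ∀ i, Dichotomous (pref i) (A i)) :
    (∀ p : X → ℝ, IsLottery p → ExPostEff pref p → ExAnteEff pref p) ↔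
      ∃ lam : N → ℝ, (∀ i, 0 < lam i) ∧
        ∃ c : ℝ, ∀ x, ParetoOptimal pref x →
          (∑ i, if x ∈ A i then lam i else 0) = c :=
  stmt_15_general pref A hpref
end

section
/- For any profile of single-peaked preferences, every ex-post efficient lottery is ex-ante efficient (the sets of ex-ante and ex-post efficient lotteries coincide). -/
attribute [local instance] Classical.propDecidable

/-- A preference is single-peaked with respect to the linear order on `X`. -/
def SinglePeaked {X : Type*} [LinearOrder X] (r : X → X → Prop) : Prop :=
  ∃ peak : X, ∀ x y : X, ((peak ≤ x ∧ x < y) ∨ (y < x ∧ x ≤ peak)) → strictPref r x y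

lemma sum_eq_of_agree {X : Type*} [Fintype X] (f : X → ℝ) (S T : Finset X)
    (_hnn : ∀ y, 0 ≤ f y) (h : ∀ y, f y ≠ 0 → (y ∈ S ↔ y ∈ T)) :
    ∑ y ∈ S, f y = ∑ y ∈ T, f y := by
  have h1 : ∑ y ∈ S ∩ T, f y = ∑ y ∈ S, f y := by
    apply Finset.sum_subset Finset.inter_subset_left
    intro y hyS hy
    by_contra hne
    exact hy (Finset.mem_inter.mpr ⟨hyS, (h y hne).mp hyS⟩)
  have h2 : ∑ y ∈ S ∩ T, f y = ∑ y ∈ T, f y := by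
    apply Finset.sum_subset Finset.inter_subset_right
    intro y hyT hy
    by_contra hne
    exact hy (Finset.mem_inter.mpr ⟨(h y hne).mpr hyT, hyT⟩)
  rw [← h1, h2]

lemma split_sum_aux {X : Type*} [Fintype X] [LinearOrder X] (f : X → ℝ) (x : X)
    (S T : Finset X) (hS : ∀ y, y ∈ S ↔ y < x) (hT : ∀ y, y ∈ T ↔ x < y) :
    ∑ y, f y = (∑ y ∈ S, f y) + f x + ∑ y ∈ T, f y := by
  have hxT : x ∉ T := fun h => lt_irrefl x ((hT x).mp h)
  have hdisj : Disjoint S (insert x T) := by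
    rw [Finset.disjoint_left]
    intro a haS ha
    rcases Finset.mem_insert.mp ha with rfl | haT
    · exact lt_irrefl _ ((hS a).mp haS)
    · exact lt_asymm ((hS a).mp haS) ((hT a).mp haT)
  have hunion : S ∪ insert x T = Finset.univ := by
    ext y
    simp only [Finset.mem_union, Finset.mem_insert, Finset.mem_univ, iff_true, hS, hT]
    rcases lt_trichotomy y x with h | h | h
    · exact Or.inl h
    · exact Or.inr (Or.inl h)
    · exact Or.inr (Or.inr h)
  rw [show (Finset.univ : Finset X) = S ∪ insert x T from hunion.symm,
    Finset.sum_union hdisj, Finset.sum_insert hxT]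
  ring

/-- For any profile of single-peaked preferences, every ex-post efficient
lottery is ex-ante efficient. -/
theorem stmt_16 {X N : Type*} [Fintype X] [Nonempty X] [LinearOrder X]
    [Fintype N] [Nonempty N]
    (pref : N → X → X → Prop) (hpref : ∀ i, IsPrefOrder (pref i))
    (hsp : ∀ i, SinglePeaked (pref i))
    (p : X → ℝ) (hp : IsLottery p) (hpost : ExPostEff pref p) :
    ExAnteEff pref p := by
  rintro ⟨q, hq, hge, j, hgt⟩
  classical
  choose pk hpk using hsp
  obtain ⟨ia, -, hia⟩ := Finset.exists_min_image Finset.univ pk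
    ⟨Classical.arbitrary N, Finset.mem_univ _⟩
  obtain ⟨ib, -, hib⟩ := Finset.exists_max_image Finset.univ pk
    ⟨Classical.arbitrary N, Finset.mem_univ _⟩
  set A := pk ia with hAdef
  set B := pk ib with hBdef
  have hA : ∀ i, A ≤ pk i := fun i => hia i (Finset.mem_univ i)
  have hB : ∀ i, pk i ≤ B := fun i => hib i (Finset.mem_univ i)
  -- Step 1: p is supported on [A, B]
  have hp0 : ∀ x, x < A ∨ B < x → p x = 0 := by
    intro x hx
    by_contra h0
    have hpos : 0 < p x := lt_of_le_of_ne (hp.1 x) (Ne.symm h0)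
    have hPO := hpost x hpos
    rcases hx with hx | hx
    · exact hPO ⟨A, fun i => (hpk i A x (Or.inr ⟨hx, hA i⟩)).1, ia,
        hpk ia A x (Or.inr ⟨hx, hA ia⟩)⟩
    · exact hPO ⟨B, fun i => (hpk i B x (Or.inl ⟨hB i, hx⟩)).1, ib,
        hpk ib B x (Or.inl ⟨hB ib, hx⟩)⟩
  have hsupp_p : ∀ y, p y ≠ 0 → A ≤ y ∧ y ≤ B := fun y h =>
    ⟨le_of_not_gt (fun c => h (hp0 y (Or.inl c))),
     le_of_not_gt (fun c => h (hp0 y (Or.inr c)))⟩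
  -- Step 2: q is supported on [A, B]
  have hq0 : ∀ x, x < A ∨ B < x → q x = 0 := by
    intro x hx
    obtain ⟨k, hS⟩ : ∃ k, ∀ y, p y ≠ 0 → strictPref (pref k) y x := by
      rcases hx with hx | hx
      · exact ⟨ib, fun y hy => hpk ib y x
          (Or.inr ⟨lt_of_lt_of_le hx (hsupp_p y hy).1, (hsupp_p y hy).2⟩)⟩
      · exact ⟨ia, fun y hy => hpk ia y x
          (Or.inl ⟨(hsupp_p y hy).1, lt_of_le_of_lt (hsupp_p y hy).2 hx⟩)⟩
    have h1 : (1:ℝ) ≤ upWeight (pref k) p x := by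
      unfold upWeight
      have heq : ∑ y ∈ Finset.univ.filter (fun y => strictPref (pref k) y x), p y
          = ∑ y, p y := by
        apply Finset.sum_subset (Finset.subset_univ _)
        intro y _ hy
        by_contra hne
        exact hy (Finset.mem_filter.mpr ⟨Finset.mem_univ y, hS y hne⟩)
      rw [heq, hp.2]
    have h2 : (1:ℝ) ≤ upWeight (pref k) q x := le_trans h1 (hge k x)
    have hxnot : x ∉ Finset.univ.filter (fun y => strictPref (pref k) y x) := by
      simp only [Finset.mem_filter, Finset.mem_univ, true_and]
      exact fun h => h.2 h.1
    have h3 : q x + upWeight (pref k) q x ≤ 1 := by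
      have := Finset.sum_insert hxnot (f := q)
      have hle : ∑ y ∈ insert x (Finset.univ.filter (fun y => strictPref (pref k) y x)), q y
          ≤ ∑ y, q y :=
        Finset.sum_le_sum_of_subset_of_nonneg (Finset.subset_univ _) (fun y _ _ => hq.1 y)
      rw [this, hq.2] at hle
      exact hle
    have h4 := hq.1 x
    linarith
  have hsupp_q : ∀ y, q y ≠ 0 → A ≤ y ∧ y ≤ B := fun y h =>
    ⟨le_of_not_gt (fun c => h (hq0 y (Or.inl c))),
     le_of_not_gt (fun c => h (hq0 y (Or.inr c)))⟩
  -- Step 3: cumulative inequality below x (agent ia)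
  have hcumlt : ∀ x, A ≤ x →
      ∑ y ∈ Finset.univ.filter (fun y => y < x), p y
        ≤ ∑ y ∈ Finset.univ.filter (fun y => y < x), q y := by
    intro x hx
    have hagree : ∀ y, A ≤ y ∧ y ≤ B → (strictPref (pref ia) y x ↔ y < x) := by
      intro y hy
      constructor
      · intro hS
        by_contra hc
        push_neg at hc
        rcases eq_or_lt_of_le hc with h | h
        · subst h; exact hS.2 hS.1
        · exact hS.2 (hpk ia x y (Or.inl ⟨hx, h⟩)).1
      · intro h
        exact hpk ia y x (Or.inl ⟨hy.1, h⟩)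
    have ep : ∑ y ∈ Finset.univ.filter (fun y => strictPref (pref ia) y x), p y
        = ∑ y ∈ Finset.univ.filter (fun y => y < x), p y :=
      sum_eq_of_agree p _ _ hp.1 (by
        intro y hy
        simp only [Finset.mem_filter, Finset.mem_univ, true_and]
        exact hagree y (hsupp_p y hy))
    have eqq : ∑ y ∈ Finset.univ.filter (fun y => strictPref (pref ia) y x), q y
        = ∑ y ∈ Finset.univ.filter (fun y => y < x), q y :=
      sum_eq_of_agree q _ _ hq.1 (by
        intro y hy
        simp only [Finset.mem_filter, Finset.mem_univ, true_and]
        exact hagree y (hsupp_q y hy))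
    have := hge ia x
    unfold upWeight at this
    linarith
  -- Step 4: cumulative inequality above x (agent ib)
  have hcumgt : ∀ x, x ≤ B →
      ∑ y ∈ Finset.univ.filter (fun y => x < y), p y
        ≤ ∑ y ∈ Finset.univ.filter (fun y => x < y), q y := by
    intro x hx
    have hagree : ∀ y, A ≤ y ∧ y ≤ B → (strictPref (pref ib) y x ↔ x < y) := by
      intro y hy
      constructor
      · intro hS
        by_contra hc
        push_neg at hc
        rcases eq_or_lt_of_le hc with h | h
        · subst h; exact hS.2 hS.1
        · exact hS.2 (hpk ib x y (Or.inr ⟨h, hx⟩)).1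
      · intro h
        exact hpk ib y x (Or.inr ⟨h, hy.2⟩)
    have ep : ∑ y ∈ Finset.univ.filter (fun y => strictPref (pref ib) y x), p y
        = ∑ y ∈ Finset.univ.filter (fun y => x < y), p y :=
      sum_eq_of_agree p _ _ hp.1 (by
        intro y hy
        simp only [Finset.mem_filter, Finset.mem_univ, true_and]
        exact hagree y (hsupp_p y hy))
    have eqq : ∑ y ∈ Finset.univ.filter (fun y => strictPref (pref ib) y x), q y
        = ∑ y ∈ Finset.univ.filter (fun y => x < y), q y :=
      sum_eq_of_agree q _ _ hq.1 (by
        intro y hy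
        simp only [Finset.mem_filter, Finset.mem_univ, true_and]
        exact hagree y (hsupp_q y hy))
    have := hge ib x
    unfold upWeight at this
    linarith
  -- Step 5: pointwise q ≤ p
  have hqp : ∀ x, q x ≤ p x := by
    intro x
    by_cases hxa : x < A
    · rw [hq0 x (Or.inl hxa)]; exact hp.1 x
    by_cases hxb : B < x
    · rw [hq0 x (Or.inr hxb)]; exact hp.1 x
    push_neg at hxa hxb
    have h1 := hcumlt x hxa
    have h2 := hcumgt x hxb
    have ep := split_sum_aux p x (Finset.univ.filter (fun y => y < x))
      (Finset.univ.filter (fun y => x < y)) (fun y => by simp) (fun y => by simp)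
    have eqq := split_sum_aux q x (Finset.univ.filter (fun y => y < x))
      (Finset.univ.filter (fun y => x < y)) (fun y => by simp) (fun y => by simp)
    rw [hp.2] at ep
    rw [hq.2] at eqq
    linarith
  -- Step 6: q = p
  have hqep : ∀ x, q x = p x := by
    have hsum : ∑ x, q x = ∑ x, p x := by rw [hq.2, hp.2]
    intro x
    exact (Finset.sum_eq_sum_iff_of_le (fun i _ => hqp i)).mp hsum x (Finset.mem_univ x)
  -- Step 7: contradiction with strictness
  obtain ⟨x, hx⟩ := hgt.2
  have heq : upWeight (pref j) q x = upWeight (pref j) p x :=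
    Finset.sum_congr rfl (fun y _ => hqep y)
  linarith
end

section
/- Let p be a lottery such that every outcome x in supp p is the unique most-preferred outcome of some agent, i.e., for every x with p(x) > 0 there exists i ∈ N with x ≻_i z for all z ∈ X, z ≠ x. Then p is ex-ante efficient. (In particular, for a profile of strict preferences the output of Random Serial Dictatorship, which is supported on agents' top outcomes, is ex-ante efficient.) -/
attribute [local instance] Classical.propDecidable

lemma exists_max_pref {X : Type*} (r : X → X → Prop) (hr : IsPrefOrder r)
    (s : Finset X) (hs : s.Nonempty) : ∃ z ∈ s, ∀ y ∈ s, r z y := by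
  induction hs using Finset.Nonempty.cons_induction with
  | singleton a =>
    refine ⟨a, Finset.mem_singleton_self a, ?_⟩
    intro y hy
    rw [Finset.mem_singleton] at hy
    subst hy
    rcases hr.1 y y with h | h <;> exact h
  | cons a s ha hs ih =>
    obtain ⟨z, hz, hzmax⟩ := ih
    rcases hr.1 a z with h | h
    · refine ⟨a, Finset.mem_cons_self a s, ?_⟩
      intro y hy
      rcases Finset.mem_cons.mp hy with rfl | hy
      · rcases hr.1 y y with h' | h' <;> exact h'
      · exact hr.2 h (hzmax y hy)
    · refine ⟨z, Finset.mem_cons.mpr (Or.inr hz), ?_⟩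
      intro y hy
      rcases Finset.mem_cons.mp hy with rfl | hy
      · exact h
      · exact hzmax y hy

/-- A lottery supported on outcomes each of which is the unique top outcome
of some agent is ex-ante efficient. -/
theorem stmt_17 {X N : Type*} [Fintype X] [Nonempty X] [Fintype N] [Nonempty N]
    (pref : N → X → X → Prop) (hpref : ∀ i, IsPrefOrder (pref i))
    (p : X → ℝ) (hp : IsLottery p)
    (htop : ∀ x, 0 < p x → ∃ i, ∀ z, z ≠ x → strictPref (pref i) x z) :
    ExAnteEff pref p := by
  rintro ⟨q, ⟨hq0, hq1⟩, hge, j, hgt⟩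
  have key : ∀ x, p x ≤ q x := by
    intro x
    by_cases hx : 0 < p x
    · obtain ⟨i, hi⟩ := htop x hx
      by_cases hs : (Finset.univ.erase x).Nonempty
      · obtain ⟨z, hz, hzmax⟩ := exists_max_pref (pref i) (hpref i) _ hs
        have hzx : z ≠ x := (Finset.mem_erase.mp hz).1
        have hfil : Finset.univ.filter (fun y => strictPref (pref i) y z) = {x} := by
          ext y
          simp only [Finset.mem_filter, Finset.mem_univ, true_and, Finset.mem_singleton]
          constructor
          · intro hy
            by_contra hyx
            exact hy.2 (hzmax y (Finset.mem_erase.mpr ⟨hyx, Finset.mem_univ y⟩))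
          · rintro rfl
            exact hi z hzx
        have h1 := hge i z
        rw [upWeight, upWeight, hfil, Finset.sum_singleton, Finset.sum_singleton] at h1
        exact h1
      · have hall : ∀ y : X, y = x := by
          intro y
          by_contra h
          exact hs ⟨y, Finset.mem_erase.mpr ⟨h, Finset.mem_univ y⟩⟩
        have hu : (Finset.univ : Finset X) = {x} := by
          ext y; simp [hall y]
        have h1 : q x = 1 := by rw [← hq1, hu, Finset.sum_singleton]
        have h2 : p x = 1 := by rw [← hp.2, hu, Finset.sum_singleton]
        linarith
    · push_neg at hx
      exact le_trans hx (hq0 x)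
  have hqp : q = p := by
    funext x
    by_contra h
    have hlt : p x < q x := lt_of_le_of_ne (key x) (Ne.symm h)
    have hsum : ∑ y, p y < ∑ y, q y :=
      Finset.sum_lt_sum (fun y _ => key y) ⟨x, Finset.mem_univ x, hlt⟩
    rw [hp.2, hq1] at hsum
    exact lt_irrefl _ hsum
  obtain ⟨x, hx⟩ := hgt.2
  rw [hqp] at hx
  exact lt_irrefl _ hx
end

section
/- For any natural numbers n and m such that (n ≥ 3 and m ≥ 6) or (n ≥ 4 and m ≥ 4), there exist a finite set X of outcomes, a set N of n agents, and a preference profile (≿_i)_{i∈N} on X whose set X* of Pareto optimal outcomes has exactly m elements, such that the set of ex-ante efficient lotteries is strictly contained in the set of ex-post efficient lotteries. -/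
attribute [local instance] Classical.propDecidable

namespace Stmt18Aux

noncomputable def dlt {k : ℕ} (a : Fin k) : Fin k → ℝ := fun x => if x = a then 1 else 0

lemma dlt_nonneg {k : ℕ} (a x : Fin k) : 0 ≤ dlt a x := by
  unfold dlt; split <;> norm_num

lemma sum_dlt_filter {k : ℕ} (s : Finset (Fin k)) (a : Fin k) :
    ∑ y ∈ s, dlt a y = if a ∈ s then 1 else 0 := by
  unfold dlt
  exact Finset.sum_ite_eq' s a (fun _ => (1:ℝ))

lemma sum_dlt {k : ℕ} (a : Fin k) : ∑ x, dlt a x = 1 := by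
  rw [sum_dlt_filter]; simp

lemma upWeight_shift {k : ℕ} (r : Fin k → Fin k → Prop) (p : Fin k → ℝ) (c : ℝ) (y x z : Fin k) :
    upWeight r (fun w => p w + c * (dlt y w - dlt x w)) z
      = upWeight r p z + c * ((if strictPref r y z then (1:ℝ) else 0)
          - (if strictPref r x z then 1 else 0)) := by
  unfold upWeight
  rw [Finset.sum_add_distrib, ← Finset.mul_sum, Finset.sum_sub_distrib,
    sum_dlt_filter, sum_dlt_filter]
  simp [Finset.mem_filter]

lemma upWeight_comb3 {k : ℕ} (r : Fin k → Fin k → Prop) (w : ℝ) (a b c z : Fin k) :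
    upWeight r (fun x => w * (dlt a x + dlt b x + dlt c x)) z
      = w * ((if strictPref r a z then (1:ℝ) else 0) + (if strictPref r b z then 1 else 0)
          + (if strictPref r c z then 1 else 0)) := by
  unfold upWeight
  rw [← Finset.mul_sum, Finset.sum_add_distrib, Finset.sum_add_distrib,
    sum_dlt_filter, sum_dlt_filter, sum_dlt_filter]
  simp [Finset.mem_filter]

lemma upWeight_comb2 {k : ℕ} (r : Fin k → Fin k → Prop) (w : ℝ) (a b z : Fin k) :
    upWeight r (fun x => w * (dlt a x + dlt b x)) z
      = w * ((if strictPref r a z then (1:ℝ) else 0) + (if strictPref r b z then 1 else 0)) := by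
  unfold upWeight
  rw [← Finset.mul_sum, Finset.sum_add_distrib, sum_dlt_filter, sum_dlt_filter]
  simp [Finset.mem_filter]

lemma strict_util {α : Type*} (v : α → ℤ) (x y : α) :
    strictPref (fun a b => v b ≤ v a) x y ↔ v y < v x := by
  rw [lt_iff_le_not_ge]; rfl

lemma chi_mono {A B z : ℤ} (h : A ≤ B) :
    (if z < A then (1:ℝ) else 0) ≤ if z < B then 1 else 0 := by
  split_ifs with h1 h2
  · exact le_refl 1
  · exact absurd (h1.trans_le h) h2
  · norm_num
  · exact le_refl 0

lemma exAnte_imp_exPost {k : ℕ} {N : Type*} (pref : N → Fin k → Fin k → Prop)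
    (hpref : ∀ i, IsPrefOrder (pref i)) (p : Fin k → ℝ) (hp : IsLottery p)
    (hea : ExAnteEff pref p) : ExPostEff pref p := by
  intro x hx
  by_contra hnpo
  apply hea
  rw [ParetoOptimal, not_not] at hnpo
  obtain ⟨y, hall, j, hstr⟩ := hnpo
  have hyx : y ≠ x := by
    rintro rfl; exact hstr.2 hstr.1
  refine ⟨fun z => p z + p x * (dlt y z - dlt x z), ⟨?_, ?_⟩, ?_, ?_⟩
  · intro z
    show (0:ℝ) ≤ p z + p x * (dlt y z - dlt x z)
    by_cases hz : z = x
    · subst hz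
      have h1 : dlt y z = 0 := by simp [dlt, Ne.symm hyx]
      have h2 : dlt z z = 1 := by simp [dlt]
      rw [h1, h2]
      have h3 := hp.1 z
      nlinarith
    · have h1 : dlt x z = 0 := by simp [dlt, hz]
      have h2 := dlt_nonneg y z
      have h3 := hp.1 z
      have h4 := hp.1 x
      rw [h1]
      nlinarith
  · rw [Finset.sum_add_distrib, ← Finset.mul_sum]
    have : ∑ z, (dlt y z - dlt x z) = 0 := by
      rw [Finset.sum_sub_distrib, sum_dlt, sum_dlt]; ring
    rw [this, hp.2]; ring
  · intro i z
    rw [upWeight_shift]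
    have hmono : (if strictPref (pref i) x z then (1:ℝ) else 0)
        ≤ if strictPref (pref i) y z then 1 else 0 := by
      have himp : strictPref (pref i) x z → strictPref (pref i) y z := by
        rintro ⟨h1, h2⟩
        exact ⟨(hpref i).2 (hall i) h1, fun hzy => h2 ((hpref i).2 hzy (hall i))⟩
      split_ifs with ha hb
      · exact le_refl 1
      · exact absurd (himp ha) hb
      · norm_num
      · exact le_refl 0
    nlinarith [hp.1 x]
  · refine ⟨j, ?_, x, ?_⟩
    · intro z
      rw [upWeight_shift]
      have hmono : (if strictPref (pref j) x z then (1:ℝ) else 0)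
          ≤ if strictPref (pref j) y z then 1 else 0 := by
        have himp : strictPref (pref j) x z → strictPref (pref j) y z := by
          rintro ⟨h1, h2⟩
          exact ⟨(hpref j).2 (hall j) h1, fun hzy => h2 ((hpref j).2 hzy (hall j))⟩
        split_ifs with ha hb
        · exact le_refl 1
        · exact absurd (himp ha) hb
        · norm_num
        · exact le_refl 0
      nlinarith [hp.1 x]
    · rw [upWeight_shift]
      have h1 : (if strictPref (pref j) y x then (1:ℝ) else 0) = 1 := if_pos hstr
      have h2 : (if strictPref (pref j) x x then (1:ℝ) else 0) = 0 := by
        have : ¬ strictPref (pref j) x x := fun h => h.2 h.1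
        exact if_neg this
      rw [h1, h2]
      nlinarith

lemma all_po {k : ℕ} {N : Type*} (u : N → Fin k → ℤ)
    (hconf : ∀ x y : Fin k, x ≠ y → ∃ i, u i y < u i x) :
    ∀ x : Fin k, ParetoOptimal (fun i a b => u i b ≤ u i a) x := by
  rintro x ⟨y, hall, j, hstr⟩
  have hxy : x ≠ y := by
    rintro rfl; exact hstr.2 hstr.1
  obtain ⟨i, hi⟩ := hconf x y hxy
  exact absurd (hall i) (not_le.mpr hi)

def rl (R i : ℕ) : ℕ := if i < R then i else 0

def utl6 (r v : ℕ) : ℤ :=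
  if v < 6 then (([[5,4,3,2,1,0],[1,2,5,0,3,4],[3,0,1,4,5,2]] : List (List ℤ)).getD r []).getD v 0
  else if r = 2 then 100 + (v:ℤ) else -(v:ℤ)

def wit6 (a b : ℕ) : ℕ :=
  (([[0,0,0,0,0,0],[1,0,0,0,0,0],[1,1,0,0,0,0],[2,2,2,0,0,0],[1,1,2,1,0,0],[1,1,2,1,1,0]] :
    List (List ℕ)).getD a []).getD b 0

lemma wit6_lt : ∀ a < 6, ∀ b < 6, wit6 a b < 3 := by decide
lemma wit6_conf : ∀ a < 6, ∀ b < 6, a ≠ b → utl6 (wit6 a b) b < utl6 (wit6 a b) a := by decide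
lemma utl6_bounds : ∀ r < 3, ∀ v < 6, 0 ≤ utl6 r v ∧ utl6 r v < 100 := by decide
lemma utl6_pad_bot (r v : ℕ) (hv : ¬ v < 6) (hr : r ≠ 2) : utl6 r v = -(v:ℤ) := by
  unfold utl6; rw [if_neg hv, if_neg hr]
lemma utl6_pad_top (v : ℕ) (hv : ¬ v < 6) : utl6 2 v = 100 + (v:ℤ) := by
  unfold utl6; rw [if_neg hv, if_pos rfl]

def uu6 (n m : ℕ) (i : Fin n) (x : Fin m) : ℤ := utl6 (rl 3 i.val) x.val

lemma conf6 (n m : ℕ) (hn : 3 ≤ n) :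
    ∀ x y : Fin m, x ≠ y → ∃ i : Fin n, uu6 n m i y < uu6 n m i x := by
  intro x y hxy
  have hv : x.val ≠ y.val := fun h => hxy (Fin.val_injective h)
  by_cases hx : x.val < 6 <;> by_cases hy : y.val < 6
  · refine ⟨⟨wit6 x.val y.val, lt_of_lt_of_le (wit6_lt _ hx _ hy) hn⟩, ?_⟩
    show utl6 (rl 3 (wit6 x.val y.val)) y.val < utl6 (rl 3 (wit6 x.val y.val)) x.val
    have hw := wit6_lt _ hx _ hy
    have hr : rl 3 (wit6 x.val y.val) = wit6 x.val y.val := by unfold rl; split <;> omega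
    rw [hr]
    exact wit6_conf _ hx _ hy hv
  · refine ⟨⟨0, by omega⟩, ?_⟩
    show utl6 (rl 3 0) y.val < utl6 (rl 3 0) x.val
    have hr : rl 3 0 = 0 := by decide
    rw [hr, utl6_pad_bot 0 y.val hy (by decide)]
    have h2 := (utl6_bounds 0 (by decide) x.val hx).1
    omega
  · refine ⟨⟨2, by omega⟩, ?_⟩
    show utl6 (rl 3 2) y.val < utl6 (rl 3 2) x.val
    have hr : rl 3 2 = 2 := by decide
    rw [hr, utl6_pad_top x.val hx]
    have h2 := (utl6_bounds 2 (by decide) y.val hy).2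
    omega
  · rcases lt_or_gt_of_ne hv with hlt | hgt
    · refine ⟨⟨0, by omega⟩, ?_⟩
      show utl6 (rl 3 0) y.val < utl6 (rl 3 0) x.val
      have hr : rl 3 0 = 0 := by decide
      rw [hr, utl6_pad_bot 0 y.val hy (by decide), utl6_pad_bot 0 x.val hx (by decide)]
      omega
    · refine ⟨⟨2, by omega⟩, ?_⟩
      show utl6 (rl 3 2) y.val < utl6 (rl 3 2) x.val
      have hr : rl 3 2 = 2 := by decide
      rw [hr, utl6_pad_top x.val hx, utl6_pad_top y.val hy]
      omega

lemma gadget6 (n m : ℕ) (hn : 3 ≤ n) (hm : 6 ≤ m) :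
    ∃ (k : ℕ) (pref : Fin n → Fin k → Fin k → Prop),
      (∀ i, IsPrefOrder (pref i)) ∧
      (Finset.univ.filter (fun x => ParetoOptimal pref x)).card = m ∧
      (∀ p : Fin k → ℝ, IsLottery p → ExAnteEff pref p → ExPostEff pref p) ∧
      (∃ p : Fin k → ℝ, IsLottery p ∧ ExPostEff pref p ∧ ¬ ExAnteEff pref p) := by
  have hpref : ∀ i : Fin n, IsPrefOrder (fun x y : Fin m => uu6 n m i y ≤ uu6 n m i x) :=
    fun i => ⟨fun x y => le_total _ _, fun a b c h1 h2 => le_trans h2 h1⟩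
  have hPO := all_po (uu6 n m) (conf6 n m hn)
  have hq : IsLottery (fun x => (1/3 : ℝ) * (dlt (⟨0, by omega⟩ : Fin m) x
      + dlt ⟨2, by omega⟩ x + dlt ⟨4, by omega⟩ x)) := by
    constructor
    · intro z
      have a0 := dlt_nonneg (⟨0, by omega⟩ : Fin m) z
      have a2 := dlt_nonneg (⟨2, by omega⟩ : Fin m) z
      have a4 := dlt_nonneg (⟨4, by omega⟩ : Fin m) z
      show (0:ℝ) ≤ (1/3 : ℝ) * (dlt ⟨0, by omega⟩ z + dlt ⟨2, by omega⟩ z + dlt ⟨4, by omega⟩ z)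
      linarith
    · show ∑ x, (1/3 : ℝ) * (dlt (⟨0, by omega⟩ : Fin m) x
        + dlt ⟨2, by omega⟩ x + dlt ⟨4, by omega⟩ x) = 1
      rw [← Finset.mul_sum, Finset.sum_add_distrib, Finset.sum_add_distrib,
        sum_dlt, sum_dlt, sum_dlt]
      norm_num
  have hp : IsLottery (fun x => (1/3 : ℝ) * (dlt (⟨1, by omega⟩ : Fin m) x
      + dlt ⟨3, by omega⟩ x + dlt ⟨5, by omega⟩ x)) := by
    constructor
    · intro z
      have a0 := dlt_nonneg (⟨1, by omega⟩ : Fin m) z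
      have a2 := dlt_nonneg (⟨3, by omega⟩ : Fin m) z
      have a4 := dlt_nonneg (⟨5, by omega⟩ : Fin m) z
      show (0:ℝ) ≤ (1/3 : ℝ) * (dlt ⟨1, by omega⟩ z + dlt ⟨3, by omega⟩ z + dlt ⟨5, by omega⟩ z)
      linarith
    · show ∑ x, (1/3 : ℝ) * (dlt (⟨1, by omega⟩ : Fin m) x
        + dlt ⟨3, by omega⟩ x + dlt ⟨5, by omega⟩ x) = 1
      rw [← Finset.mul_sum, Finset.sum_add_distrib, Finset.sum_add_distrib,
        sum_dlt, sum_dlt, sum_dlt]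
      norm_num
  have hge : ∀ i : Fin n, SDge (fun x y : Fin m => uu6 n m i y ≤ uu6 n m i x)
      (fun x => (1/3 : ℝ) * (dlt ⟨0, by omega⟩ x + dlt ⟨2, by omega⟩ x + dlt ⟨4, by omega⟩ x))
      (fun x => (1/3 : ℝ) * (dlt ⟨1, by omega⟩ x + dlt ⟨3, by omega⟩ x + dlt ⟨5, by omega⟩ x)) := by
    intro i z
    rw [upWeight_comb3, upWeight_comb3]
    simp only [strict_util]
    have v0 : uu6 n m i ⟨0, by omega⟩ = utl6 (rl 3 i.val) 0 := rfl
    have v1 : uu6 n m i ⟨1, by omega⟩ = utl6 (rl 3 i.val) 1 := rfl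
    have v2 : uu6 n m i ⟨2, by omega⟩ = utl6 (rl 3 i.val) 2 := rfl
    have v3 : uu6 n m i ⟨3, by omega⟩ = utl6 (rl 3 i.val) 3 := rfl
    have v4 : uu6 n m i ⟨4, by omega⟩ = utl6 (rl 3 i.val) 4 := rfl
    have v5 : uu6 n m i ⟨5, by omega⟩ = utl6 (rl 3 i.val) 5 := rfl
    rw [v0, v1, v2, v3, v4, v5]
    have hris : rl 3 i.val = 0 ∨ rl 3 i.val = 1 ∨ rl 3 i.val = 2 := by
      unfold rl; split <;> omega
    have c1 := @chi_mono 0 1 (uu6 n m i z) (by norm_num)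
    have c2 := @chi_mono 2 3 (uu6 n m i z) (by norm_num)
    have c3 := @chi_mono 4 5 (uu6 n m i z) (by norm_num)
    rcases hris with h | h | h <;> rw [h] <;>
      simp only [show utl6 0 0 = 5 from by decide,
    show utl6 0 1 = 4 from by decide,
    show utl6 0 2 = 3 from by decide,
    show utl6 0 3 = 2 from by decide,
    show utl6 0 4 = 1 from by decide,
    show utl6 0 5 = 0 from by decide,
    show utl6 1 0 = 1 from by decide,
    show utl6 1 1 = 2 from by decide,
    show utl6 1 2 = 5 from by decide,
    show utl6 1 3 = 0 from by decide,
    show utl6 1 4 = 3 from by decide,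
    show utl6 1 5 = 4 from by decide,
    show utl6 2 0 = 3 from by decide,
    show utl6 2 1 = 0 from by decide,
    show utl6 2 2 = 1 from by decide,
    show utl6 2 3 = 4 from by decide,
    show utl6 2 4 = 5 from by decide,
    show utl6 2 5 = 2 from by decide] <;>
      linarith
  refine ⟨m, fun i x y => uu6 n m i y ≤ uu6 n m i x, hpref, ?_, ?_, ?_⟩
  · rw [Finset.filter_true_of_mem (fun x _ => hPO x), Finset.card_univ, Fintype.card_fin]
  · exact fun p hp hea => exAnte_imp_exPost _ hpref p hp hea
  · refine ⟨fun x => (1/3 : ℝ) * (dlt ⟨1, by omega⟩ x + dlt ⟨3, by omega⟩ x + dlt ⟨5, by omega⟩ x),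
      hp, fun x _ => hPO x, ?_⟩
    intro hea
    refine hea ⟨fun x => (1/3 : ℝ) * (dlt ⟨0, by omega⟩ x + dlt ⟨2, by omega⟩ x + dlt ⟨4, by omega⟩ x),
      hq, hge, ⟨0, by omega⟩, hge _, ⟨5, by omega⟩, ?_⟩
    rw [upWeight_comb3, upWeight_comb3]
    simp only [strict_util]
    have v0 : uu6 n m (⟨0, by omega⟩ : Fin n) (⟨0, by omega⟩ : Fin m) = utl6 (rl 3 0) 0 := rfl
    have v1 : uu6 n m (⟨0, by omega⟩ : Fin n) (⟨1, by omega⟩ : Fin m) = utl6 (rl 3 0) 1 := rfl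
    have v2 : uu6 n m (⟨0, by omega⟩ : Fin n) (⟨2, by omega⟩ : Fin m) = utl6 (rl 3 0) 2 := rfl
    have v3 : uu6 n m (⟨0, by omega⟩ : Fin n) (⟨3, by omega⟩ : Fin m) = utl6 (rl 3 0) 3 := rfl
    have v4 : uu6 n m (⟨0, by omega⟩ : Fin n) (⟨4, by omega⟩ : Fin m) = utl6 (rl 3 0) 4 := rfl
    have v5 : uu6 n m (⟨0, by omega⟩ : Fin n) (⟨5, by omega⟩ : Fin m) = utl6 (rl 3 0) 5 := rfl
    rw [v0, v1, v2, v3, v4, v5]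
    have hr0 : rl 3 0 = 0 := by decide
    rw [hr0]
    simp only [show utl6 0 0 = 5 from by decide,
    show utl6 0 1 = 4 from by decide,
    show utl6 0 2 = 3 from by decide,
    show utl6 0 3 = 2 from by decide,
    show utl6 0 4 = 1 from by decide,
    show utl6 0 5 = 0 from by decide,
    show utl6 1 0 = 1 from by decide,
    show utl6 1 1 = 2 from by decide,
    show utl6 1 2 = 5 from by decide,
    show utl6 1 3 = 0 from by decide,
    show utl6 1 4 = 3 from by decide,
    show utl6 1 5 = 4 from by decide,
    show utl6 2 0 = 3 from by decide,
    show utl6 2 1 = 0 from by decide,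
    show utl6 2 2 = 1 from by decide,
    show utl6 2 3 = 4 from by decide,
    show utl6 2 4 = 5 from by decide,
    show utl6 2 5 = 2 from by decide]
    norm_num

def utl4 (r v : ℕ) : ℤ :=
  if v < 4 then (([[3,2,1,0],[3,0,1,2],[1,2,3,0],[1,0,3,2]] : List (List ℤ)).getD r []).getD v 0
  else if r = 2 then 100 + (v:ℤ) else -(v:ℤ)

def wit4 (a b : ℕ) : ℕ :=
  (([[0,0,0,0],[2,0,0,0],[2,1,0,0],[3,1,1,0]] : List (List ℕ)).getD a []).getD b 0

lemma wit4_lt : ∀ a < 4, ∀ b < 4, wit4 a b < 4 := by decide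
lemma wit4_conf : ∀ a < 4, ∀ b < 4, a ≠ b → utl4 (wit4 a b) b < utl4 (wit4 a b) a := by decide
lemma utl4_bounds : ∀ r < 4, ∀ v < 4, 0 ≤ utl4 r v ∧ utl4 r v < 100 := by decide
lemma utl4_pad_bot (r v : ℕ) (hv : ¬ v < 4) (hr : r ≠ 2) : utl4 r v = -(v:ℤ) := by
  unfold utl4; rw [if_neg hv, if_neg hr]
lemma utl4_pad_top (v : ℕ) (hv : ¬ v < 4) : utl4 2 v = 100 + (v:ℤ) := by
  unfold utl4; rw [if_neg hv, if_pos rfl]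

def uu4 (n m : ℕ) (i : Fin n) (x : Fin m) : ℤ := utl4 (rl 4 i.val) x.val

lemma conf4 (n m : ℕ) (hn : 4 ≤ n) :
    ∀ x y : Fin m, x ≠ y → ∃ i : Fin n, uu4 n m i y < uu4 n m i x := by
  intro x y hxy
  have hv : x.val ≠ y.val := fun h => hxy (Fin.val_injective h)
  by_cases hx : x.val < 4 <;> by_cases hy : y.val < 4
  · refine ⟨⟨wit4 x.val y.val, lt_of_lt_of_le (wit4_lt _ hx _ hy) hn⟩, ?_⟩
    show utl4 (rl 4 (wit4 x.val y.val)) y.val < utl4 (rl 4 (wit4 x.val y.val)) x.val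
    have hw := wit4_lt _ hx _ hy
    have hr : rl 4 (wit4 x.val y.val) = wit4 x.val y.val := by unfold rl; split <;> omega
    rw [hr]
    exact wit4_conf _ hx _ hy hv
  · refine ⟨⟨0, by omega⟩, ?_⟩
    show utl4 (rl 4 0) y.val < utl4 (rl 4 0) x.val
    have hr : rl 4 0 = 0 := by decide
    rw [hr, utl4_pad_bot 0 y.val hy (by decide)]
    have h2 := (utl4_bounds 0 (by decide) x.val hx).1
    omega
  · refine ⟨⟨2, by omega⟩, ?_⟩
    show utl4 (rl 4 2) y.val < utl4 (rl 4 2) x.val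
    have hr : rl 4 2 = 2 := by decide
    rw [hr, utl4_pad_top x.val hx]
    have h2 := (utl4_bounds 2 (by decide) y.val hy).2
    omega
  · rcases lt_or_gt_of_ne hv with hlt | hgt
    · refine ⟨⟨0, by omega⟩, ?_⟩
      show utl4 (rl 4 0) y.val < utl4 (rl 4 0) x.val
      have hr : rl 4 0 = 0 := by decide
      rw [hr, utl4_pad_bot 0 y.val hy (by decide), utl4_pad_bot 0 x.val hx (by decide)]
      omega
    · refine ⟨⟨2, by omega⟩, ?_⟩
      show utl4 (rl 4 2) y.val < utl4 (rl 4 2) x.val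
      have hr : rl 4 2 = 2 := by decide
      rw [hr, utl4_pad_top x.val hx, utl4_pad_top y.val hy]
      omega

lemma gadget4 (n m : ℕ) (hn : 4 ≤ n) (hm : 4 ≤ m) :
    ∃ (k : ℕ) (pref : Fin n → Fin k → Fin k → Prop),
      (∀ i, IsPrefOrder (pref i)) ∧
      (Finset.univ.filter (fun x => ParetoOptimal pref x)).card = m ∧
      (∀ p : Fin k → ℝ, IsLottery p → ExAnteEff pref p → ExPostEff pref p) ∧
      (∃ p : Fin k → ℝ, IsLottery p ∧ ExPostEff pref p ∧ ¬ ExAnteEff pref p) := by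
  have hpref : ∀ i : Fin n, IsPrefOrder (fun x y : Fin m => uu4 n m i y ≤ uu4 n m i x) :=
    fun i => ⟨fun x y => le_total _ _, fun a b c h1 h2 => le_trans h2 h1⟩
  have hPO := all_po (uu4 n m) (conf4 n m hn)
  have hq : IsLottery (fun x => (1/2 : ℝ) * (dlt (⟨0, by omega⟩ : Fin m) x
      + dlt ⟨2, by omega⟩ x)) := by
    constructor
    · intro z
      have a0 := dlt_nonneg (⟨0, by omega⟩ : Fin m) z
      have a2 := dlt_nonneg (⟨2, by omega⟩ : Fin m) z
      show (0:ℝ) ≤ (1/2 : ℝ) * (dlt ⟨0, by omega⟩ z + dlt ⟨2, by omega⟩ z)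
      linarith
    · show ∑ x, (1/2 : ℝ) * (dlt (⟨0, by omega⟩ : Fin m) x + dlt ⟨2, by omega⟩ x) = 1
      rw [← Finset.mul_sum, Finset.sum_add_distrib, sum_dlt, sum_dlt]
      norm_num
  have hp : IsLottery (fun x => (1/2 : ℝ) * (dlt (⟨1, by omega⟩ : Fin m) x
      + dlt ⟨3, by omega⟩ x)) := by
    constructor
    · intro z
      have a0 := dlt_nonneg (⟨1, by omega⟩ : Fin m) z
      have a2 := dlt_nonneg (⟨3, by omega⟩ : Fin m) z
      show (0:ℝ) ≤ (1/2 : ℝ) * (dlt ⟨1, by omega⟩ z + dlt ⟨3, by omega⟩ z)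
      linarith
    · show ∑ x, (1/2 : ℝ) * (dlt (⟨1, by omega⟩ : Fin m) x + dlt ⟨3, by omega⟩ x) = 1
      rw [← Finset.mul_sum, Finset.sum_add_distrib, sum_dlt, sum_dlt]
      norm_num
  have hge : ∀ i : Fin n, SDge (fun x y : Fin m => uu4 n m i y ≤ uu4 n m i x)
      (fun x => (1/2 : ℝ) * (dlt ⟨0, by omega⟩ x + dlt ⟨2, by omega⟩ x))
      (fun x => (1/2 : ℝ) * (dlt ⟨1, by omega⟩ x + dlt ⟨3, by omega⟩ x)) := by
    intro i z
    rw [upWeight_comb2, upWeight_comb2]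
    simp only [strict_util]
    have v0 : uu4 n m i ⟨0, by omega⟩ = utl4 (rl 4 i.val) 0 := rfl
    have v1 : uu4 n m i ⟨1, by omega⟩ = utl4 (rl 4 i.val) 1 := rfl
    have v2 : uu4 n m i ⟨2, by omega⟩ = utl4 (rl 4 i.val) 2 := rfl
    have v3 : uu4 n m i ⟨3, by omega⟩ = utl4 (rl 4 i.val) 3 := rfl
    rw [v0, v1, v2, v3]
    have hris : rl 4 i.val = 0 ∨ rl 4 i.val = 1 ∨ rl 4 i.val = 2 ∨ rl 4 i.val = 3 := by
      unfold rl; split <;> omega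
    have c1 := @chi_mono 0 1 (uu4 n m i z) (by norm_num)
    have c2 := @chi_mono 2 3 (uu4 n m i z) (by norm_num)
    rcases hris with h | h | h | h <;> rw [h] <;>
      simp only [show utl4 0 0 = 3 from by decide,
    show utl4 0 1 = 2 from by decide,
    show utl4 0 2 = 1 from by decide,
    show utl4 0 3 = 0 from by decide,
    show utl4 1 0 = 3 from by decide,
    show utl4 1 1 = 0 from by decide,
    show utl4 1 2 = 1 from by decide,
    show utl4 1 3 = 2 from by decide,
    show utl4 2 0 = 1 from by decide,
    show utl4 2 1 = 2 from by decide,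
    show utl4 2 2 = 3 from by decide,
    show utl4 2 3 = 0 from by decide,
    show utl4 3 0 = 1 from by decide,
    show utl4 3 1 = 0 from by decide,
    show utl4 3 2 = 3 from by decide,
    show utl4 3 3 = 2 from by decide] <;>
      linarith
  refine ⟨m, fun i x y => uu4 n m i y ≤ uu4 n m i x, hpref, ?_, ?_, ?_⟩
  · rw [Finset.filter_true_of_mem (fun x _ => hPO x), Finset.card_univ, Fintype.card_fin]
  · exact fun p hp hea => exAnte_imp_exPost _ hpref p hp hea
  · refine ⟨fun x => (1/2 : ℝ) * (dlt ⟨1, by omega⟩ x + dlt ⟨3, by omega⟩ x),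
      hp, fun x _ => hPO x, ?_⟩
    intro hea
    refine hea ⟨fun x => (1/2 : ℝ) * (dlt ⟨0, by omega⟩ x + dlt ⟨2, by omega⟩ x),
      hq, hge, ⟨0, by omega⟩, hge _, ⟨3, by omega⟩, ?_⟩
    rw [upWeight_comb2, upWeight_comb2]
    simp only [strict_util]
    have v0 : uu4 n m (⟨0, by omega⟩ : Fin n) (⟨0, by omega⟩ : Fin m) = utl4 (rl 4 0) 0 := rfl
    have v1 : uu4 n m (⟨0, by omega⟩ : Fin n) (⟨1, by omega⟩ : Fin m) = utl4 (rl 4 0) 1 := rfl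
    have v2 : uu4 n m (⟨0, by omega⟩ : Fin n) (⟨2, by omega⟩ : Fin m) = utl4 (rl 4 0) 2 := rfl
    have v3 : uu4 n m (⟨0, by omega⟩ : Fin n) (⟨3, by omega⟩ : Fin m) = utl4 (rl 4 0) 3 := rfl
    rw [v0, v1, v2, v3]
    have hr0 : rl 4 0 = 0 := by decide
    rw [hr0]
    simp only [show utl4 0 0 = 3 from by decide,
    show utl4 0 1 = 2 from by decide,
    show utl4 0 2 = 1 from by decide,
    show utl4 0 3 = 0 from by decide,
    show utl4 1 0 = 3 from by decide,
    show utl4 1 1 = 0 from by decide,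
    show utl4 1 2 = 1 from by decide,
    show utl4 1 3 = 2 from by decide,
    show utl4 2 0 = 1 from by decide,
    show utl4 2 1 = 2 from by decide,
    show utl4 2 2 = 3 from by decide,
    show utl4 2 3 = 0 from by decide,
    show utl4 3 0 = 1 from by decide,
    show utl4 3 1 = 0 from by decide,
    show utl4 3 2 = 3 from by decide,
    show utl4 3 3 = 2 from by decide]
    norm_num

end Stmt18Aux

/-- For `n ≥ 3, m ≥ 6` or `n ≥ 4, m ≥ 4`, there is a profile of preferences
of `n` agents with exactly `m` Pareto optimal outcomes for which the set of ex-ante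
efficient lotteries is strictly contained in the set of ex-post efficient lotteries. -/
theorem stmt_18 (n m : ℕ) (h : (3 ≤ n ∧ 6 ≤ m) ∨ (4 ≤ n ∧ 4 ≤ m)) :
    ∃ (k : ℕ) (pref : Fin n → Fin k → Fin k → Prop),
      (∀ i, IsPrefOrder (pref i)) ∧
      (Finset.univ.filter (fun x => ParetoOptimal pref x)).card = m ∧
      (∀ p : Fin k → ℝ, IsLottery p → ExAnteEff pref p → ExPostEff pref p) ∧
      (∃ p : Fin k → ℝ, IsLottery p ∧ ExPostEff pref p ∧ ¬ ExAnteEff pref p) := by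
  
  rcases h with ⟨hn, hm⟩ | ⟨hn, hm⟩
  · exact Stmt18Aux.gadget6 n m hn hm
  · exact Stmt18Aux.gadget4 n m hn hm
end

section
/- Let A be an n × m matrix with integer entries and define q_{m−1}(A) as the maximum of |det A'| over all square k' × k' submatrices A' of A with 0 ≤ k' ≤ m−1 (where the determinant of the empty 0 × 0 matrix is 1). If the homogeneous system A x ≤ 0 has a real solution x ∈ ℝ^m for which at least one of the n inequalities is strict, then it has an integer solution x ∈ ℤ^m for which at least one inequality is strict and which satisfies |x_j| ≤ q_{m−1}(A) for every j = 1, …, m. -/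
/-!
Call the rows `a_i` of `A` and the unit vectors `e_j` the pool, and call a pool vector tight at
`x` if it is orthogonal to `x`. Starting from the given solution, move along a direction `v`
orthogonal to the tight vectors and to `∑ a_i` until the first further pool vector becomes
tight: all inequalities survive, `∑ ⟪a_i, x⟫ < 0` is unchanged, and the tight vectors span more.
Such a `v` exists while they span less than a hyperplane, so we reach a solution `x` whose tight
vectors contain `m - 1` independent ones `b_1, …, b_{m-1}`. Then `x` spans their orthogonal
complement, and so does the integer vector `z_j = det (e_j, b_1, …, b_{m-1})`; hence `z` or `-z`
solves the system. Expanding along the unit rows, each `z_j` is up to sign a subdeterminant of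
`A` of order at most `m - 1`.
-/

/-- The maximal absolute value of the determinant of a `k' × k'` submatrix of `A`
with `k' ≤ K` (the empty `0 × 0` matrix has determinant `1`). -/
noncomputable def subdetBound {n m : ℕ} (A : Matrix (Fin n) (Fin m) ℤ) (K : ℕ) : ℕ :=
  (Finset.range (K + 1)).sup fun k =>
    Finset.univ.sup fun fg : (Fin k → Fin n) × (Fin k → Fin m) =>
      if Function.Injective fg.1 ∧ Function.Injective fg.2 then
        ((A.submatrix fg.1 fg.2).det).natAbs
      else 0

open Function Matrix Module Submodule
open scoped InnerProductSpace

lemma exists_linearIndependent_fin_of_finrank_span {K V ι : Type*} [DivisionRing K]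
    [AddCommGroup V] [Module K V] [FiniteDimensional K V] (v : ι → V) {d : ℕ}
    (h : finrank K (span K (Set.range v)) = d) :
    ∃ R : Fin d → ι, LinearIndependent K (v ∘ R) := by
  obtain ⟨κ, a, -, hspan, hli⟩ := exists_linearIndependent' K v
  have : Fintype κ := @Fintype.ofFinite _ hli.finite
  have hcard : Fintype.card κ = d := by rw [← h, ← hspan, finrank_span_eq_card hli]
  exact ⟨a ∘ (Fintype.equivFinOfCardEq hcard).symm, hli.comp _ (Equiv.injective _)⟩

section InnerProductSpace

variable {E : Type*} [NormedAddCommGroup E] [InnerProductSpace ℝ E]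

lemma mem_orthogonal_span_iff {s : Set E} {x : E} :
    x ∈ (span ℝ s)ᗮ ↔ ∀ w ∈ s, ⟪w, x⟫_ℝ = 0 := by
  rw [← span_singleton_le_iff_mem, ← isOrtho_iff_le, isOrtho_comm, isOrtho_span]
  simp

lemma exists_smul_eq_of_mem_orthogonal_span [FiniteDimensional ℝ E] {d : ℕ}
    (hE : finrank ℝ E = d + 1) {b : Fin d → E} (hb : LinearIndependent ℝ b) {x w : E}
    (hx : x ∈ (span ℝ (Set.range b))ᗮ) (hw : w ∈ (span ℝ (Set.range b))ᗮ) (hx0 : x ≠ 0) :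
    ∃ c : ℝ, c • x = w := by
  have hdim : finrank ℝ (span ℝ (Set.range b))ᗮ = 1 := by
    have := finrank_add_finrank_orthogonal (span ℝ (Set.range b))
    rw [finrank_span_eq_card hb, Fintype.card_fin, hE] at this
    omega
  obtain ⟨c, hc⟩ := (finrank_eq_one_iff_of_nonzero' (⟨x, hx⟩ : (span ℝ (Set.range b))ᗮ)
    (by simpa using hx0)).1 hdim ⟨w, hw⟩
  exact ⟨c, congrArg Subtype.val hc⟩

variable {ι κ : Type*}

def IsNontrivialSolution (a : ι → E) (x : E) : Prop :=
  (∀ i, ⟪a i, x⟫_ℝ ≤ 0) ∧ ∃ i, ⟪a i, x⟫_ℝ < 0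

def tightSpan (p : κ → E) (x : E) : Submodule ℝ E :=
  span ℝ (p '' {k | ⟪p k, x⟫_ℝ = 0})

lemma IsNontrivialSolution.ne_zero {a : ι → E} {x : E} (hx : IsNontrivialSolution a x) :
    x ≠ 0 := by
  rintro rfl
  obtain ⟨i, hi⟩ := hx.2
  simp at hi

lemma IsNontrivialSolution.smul {a : ι → E} {x : E} (hx : IsNontrivialSolution a x) {c : ℝ}
    (hc : 0 < c) : IsNontrivialSolution a (c • x) := by
  simp only [IsNontrivialSolution, inner_smul_right]
  exact ⟨fun i => mul_nonpos_of_nonneg_of_nonpos hc.le (hx.1 i),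
    hx.2.imp fun i hi => mul_neg_of_pos_of_neg hc hi⟩

lemma mem_tightSpan_of_inner_eq_zero {p : κ → E} {x : E} {k : κ} (hk : ⟪p k, x⟫_ℝ = 0) :
    p k ∈ tightSpan p x :=
  subset_span ⟨k, hk, rfl⟩

lemma self_mem_orthogonal_tightSpan (p : κ → E) (x : E) : x ∈ (tightSpan p x)ᗮ :=
  mem_orthogonal_span_iff.2 (by rintro _ ⟨k, hk, rfl⟩; exact hk)

lemma finrank_tightSpan_lt [FiniteDimensional ℝ E] (p : κ → E) {x : E} (hx : x ≠ 0) :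
    finrank ℝ (tightSpan p x) < finrank ℝ E :=
  Submodule.finrank_lt fun h => hx <| by
    simpa [h] using self_mem_orthogonal_tightSpan p x

lemma exists_linearIndependent_tight [FiniteDimensional ℝ E] {p : κ → E} {x : E} {d : ℕ}
    (h : finrank ℝ (tightSpan p x) = d) :
    ∃ R : Fin d → κ, LinearIndependent ℝ (p ∘ R) ∧ ∀ r, ⟪p (R r), x⟫_ℝ = 0 := by
  obtain ⟨R, hR⟩ := exists_linearIndependent_fin_of_finrank_span (K := ℝ) (d := d)
    (fun k : {k | ⟪p k, x⟫_ℝ = 0} => p k) (by rwa [tightSpan, Set.image_eq_range] at h)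
  exact ⟨Subtype.val ∘ R, hR, fun r => (R r).2⟩

variable [Fintype ι] [Finite κ] {a : ι → E} {u : κ → E}

lemma exists_tightSpan_lt_of_crossing {x v : E} (hx : IsNontrivialSolution a x)
    (hvT : v ∈ (tightSpan (Sum.elim a u) x)ᗮ) (hvsum : ⟪∑ i, a i, v⟫_ℝ = 0) {k : ι ⊕ κ}
    (hk : 0 < -⟪Sum.elim a u k, x⟫_ℝ / ⟪Sum.elim a u k, v⟫_ℝ) :
    ∃ y, IsNontrivialSolution a y ∧ tightSpan (Sum.elim a u) x < tightSpan (Sum.elim a u) y := by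
  set p := Sum.elim a u
  -- along `x + t • v`, the vector `p k` becomes tight at time `τ k`
  set τ : ι ⊕ κ → ℝ := fun k => -⟪p k, x⟫_ℝ / ⟪p k, v⟫_ℝ
  obtain ⟨k₀, hk₀, hmin⟩ :=
    Set.exists_min_image {k | 0 < τ k} τ (Set.toFinite _) (show ∃ k, 0 < τ k from ⟨k, hk⟩)
  have hv_of_tight : ∀ k, ⟪p k, x⟫_ℝ = 0 → ⟪p k, v⟫_ℝ = 0 := fun k hk =>
    inner_right_of_mem_orthogonal (mem_tightSpan_of_inner_eq_zero hk) hvT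
  have hk₀v : ⟪p k₀, v⟫_ℝ ≠ 0 := fun h => by simp [τ, h] at hk₀
  set y := x + τ k₀ • v
  have hy : ∀ k, ⟪p k, y⟫_ℝ = ⟪p k, x⟫_ℝ + τ k₀ * ⟪p k, v⟫_ℝ := fun k => by
    rw [inner_add_right, inner_smul_right]
  refine ⟨y, ⟨fun i => ?_, ?_⟩, SetLike.lt_iff_le_and_exists.2 ⟨?_, p k₀, ?_, ?_⟩⟩
  · have hyi : ⟪a i, y⟫_ℝ = ⟪a i, x⟫_ℝ + τ k₀ * ⟪a i, v⟫_ℝ := hy (.inl i)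
    rw [hyi]
    rcases le_or_gt ⟪a i, v⟫_ℝ 0 with hle | hpos
    · nlinarith [hx.1 i, hk₀.out]
    · have hneg : ⟪a i, x⟫_ℝ < 0 :=
        (hx.1 i).lt_of_ne fun h => hpos.ne' (hv_of_tight (.inl i) h)
      have hle : τ k₀ ≤ -⟪a i, x⟫_ℝ / ⟪a i, v⟫_ℝ :=
        hmin (.inl i) (div_pos (neg_pos.2 hneg) hpos)
      rw [le_div_iff₀ hpos] at hle
      linarith
  · have hsum : ∑ i, ⟪a i, y⟫_ℝ = ∑ i, ⟪a i, x⟫_ℝ := by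
      rw [← sum_inner, ← sum_inner, inner_add_right, inner_smul_right, hvsum, mul_zero, add_zero]
    have hneg : ∑ i, ⟪a i, x⟫_ℝ < 0 :=
      Finset.sum_neg' (fun i _ => hx.1 i) (hx.2.imp fun i hi => ⟨Finset.mem_univ i, hi⟩)
    by_contra! h
    exact (hsum ▸ hneg).not_ge (Finset.sum_nonneg fun i _ => h i)
  · refine span_mono (Set.image_mono fun k hk => ?_)
    simp only [Set.mem_ofPred_eq] at hk ⊢
    rw [hy, hk, hv_of_tight k hk, mul_zero, add_zero]
  · refine mem_tightSpan_of_inner_eq_zero ?_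
    rw [hy, div_mul_cancel₀ _ hk₀v, add_neg_cancel]
  · exact fun h => hk₀v (inner_right_of_mem_orthogonal h hvT)

lemma exists_tightSpan_lt [FiniteDimensional ℝ E] (hu : span ℝ (Set.range u) = ⊤) {x : E}
    (hx : IsNontrivialSolution a x)
    (hT : finrank ℝ (tightSpan (Sum.elim a u) x) + 1 < finrank ℝ E) :
    ∃ y, IsNontrivialSolution a y ∧ tightSpan (Sum.elim a u) x < tightSpan (Sum.elim a u) y := by
  set T := tightSpan (Sum.elim a u) x
  have hW : T ⊔ span ℝ {∑ i, a i} ≠ ⊤ := by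
    have hsup := finrank_add_le_finrank_add_finrank T (span ℝ {∑ i, a i})
    have hc : finrank ℝ (span ℝ {∑ i, a i}) ≤ 1 := by
      simpa using finrank_span_le_card (R := ℝ) ({∑ i, a i} : Set E)
    intro h
    rw [h, finrank_top] at hsup
    omega
  obtain ⟨v, hvW, hv0⟩ := (Submodule.ne_bot_iff _).1 (mt orthogonal_eq_bot_iff.1 hW)
  have hvT : v ∈ Tᗮ := orthogonal_le le_sup_left hvW
  have hvsum : ⟪∑ i, a i, v⟫_ℝ = 0 :=
    inner_right_of_mem_orthogonal (le_sup_right (a := T) (mem_span_singleton_self _)) hvW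
  obtain ⟨k, hk⟩ : ∃ k, ⟪u k, v⟫_ℝ ≠ 0 := by
    by_contra! h
    refine hv0 ?_
    simpa [hu] using mem_orthogonal_span_iff.2 (Set.forall_mem_range.2 h)
  have hkx : ⟪u k, x⟫_ℝ ≠ 0 := fun h =>
    hk (inner_right_of_mem_orthogonal (mem_tightSpan_of_inner_eq_zero (k := Sum.inr k) h) hvT)
  rcases (div_ne_zero (neg_ne_zero.2 hkx) hk).lt_or_gt with hneg | hpos
  · refine exists_tightSpan_lt_of_crossing hx (neg_mem hvT)
      (by rw [inner_neg_right, hvsum, neg_zero]) (k := Sum.inr k) ?_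
    simpa [inner_neg_right, div_neg] using hneg
  · exact exists_tightSpan_lt_of_crossing hx hvT hvsum (k := Sum.inr k) hpos

theorem IsNontrivialSolution.exists_finrank_tightSpan [FiniteDimensional ℝ E]
    (hu : span ℝ (Set.range u) = ⊤) {x : E} (hx : IsNontrivialSolution a x) :
    ∃ y, IsNontrivialSolution a y ∧ finrank ℝ (tightSpan (Sum.elim a u) y) + 1 = finrank ℝ E := by
  set S : Set ℕ :=
    {d | ∃ y, IsNontrivialSolution a y ∧ finrank ℝ (tightSpan (Sum.elim a u) y) = d}
  have hS : BddAbove S := ⟨finrank ℝ E, by rintro _ ⟨y, -, rfl⟩; exact Submodule.finrank_le _⟩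
  obtain ⟨y, hy, hyS⟩ := Nat.sSup_mem (s := S) ⟨_, x, hx, rfl⟩ hS
  refine ⟨y, hy, le_antisymm (finrank_tightSpan_lt _ hy.ne_zero) (not_lt.1 fun hlt => ?_)⟩
  obtain ⟨y', hy', hlt'⟩ := exists_tightSpan_lt hu hy hlt
  exact (Submodule.finrank_lt_finrank_of_lt hlt').not_ge (hyS ▸ le_csSup hS ⟨y', hy', rfl⟩)

end InnerProductSpace

section Determinants

lemma det_eq_of_row_eq_single {R : Type*} [CommRing R] {q : ℕ}
    (M : Matrix (Fin (q + 1)) (Fin (q + 1)) R) {r c : Fin (q + 1)} (h : M r = Pi.single c 1) :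
    M.det = (-1) ^ (r + c : ℕ) * (M.submatrix r.succAbove c.succAbove).det := by
  rw [det_succ_row M r, Finset.sum_eq_single c (fun c' _ hc' => by simp [h, hc']) (by simp)]
  simp [h]

lemma sum_mul_adjugate_of_ne {R n : Type*} [CommRing R] [Fintype n] [DecidableEq n]
    (B : Matrix n n R) {i k : n} (h : i ≠ k) : ∑ j, B i j * adjugate B j k = 0 := by
  simpa [mul_apply, h] using congrFun (congrFun (mul_adjugate B) i) k

lemma det_finCons_ne_zero {m : ℕ} {b : Fin m → EuclideanSpace ℝ (Fin (m + 1))}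
    (hb : LinearIndependent ℝ b) {x : EuclideanSpace ℝ (Fin (m + 1))}
    (hx : x ∉ span ℝ (Set.range b)) :
    (of (Fin.cons x.ofLp fun r => (b r).ofLp)).det ≠ 0 := by
  have hrows : (of (Fin.cons x.ofLp fun r => (b r).ofLp)).row =
      (WithLp.linearEquiv 2 ℝ (Fin (m + 1) → ℝ)).toLinearMap ∘ Fin.cons x b := by
    ext r
    refine Fin.cases ?_ (fun r => ?_) r <;> rfl
  have hli : LinearIndependent ℝ (of (Fin.cons x.ofLp fun r => (b r).ofLp)).row := by
    rw [hrows]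
    exact (linearIndependent_finCons.2 ⟨hb, hx⟩).map' _ (LinearEquiv.ker _)
  exact ((isUnit_iff_isUnit_det _).1 (linearIndependent_rows_iff_isUnit.1 hli)).ne_zero

/-- The generalized cross product of `b`; row `0` of the matrix does not affect column `0` of its
adjugate. -/
noncomputable def crossVec {m : ℕ} (b : Fin m → EuclideanSpace ℝ (Fin (m + 1))) :
    EuclideanSpace ℝ (Fin (m + 1)) :=
  WithLp.toLp 2 fun j => adjugate (of (Fin.cons 0 fun r => (b r).ofLp)) j 0

lemma crossVec_eq_adjugate {m : ℕ} (b : Fin m → EuclideanSpace ℝ (Fin (m + 1)))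
    (y : Fin (m + 1) → ℝ) (j : Fin (m + 1)) :
    crossVec b j = adjugate (of (Fin.cons y fun r => (b r).ofLp)) j 0 := by
  simp only [crossVec, adjugate_apply]
  congr 1
  ext r c
  refine Fin.cases ?_ (fun r => ?_) r <;> simp

lemma exists_smul_eq_crossVec {m : ℕ} {b : Fin m → EuclideanSpace ℝ (Fin (m + 1))}
    (hb : LinearIndependent ℝ b) {x : EuclideanSpace ℝ (Fin (m + 1))} (hx0 : x ≠ 0)
    (hx : ∀ r, ⟪b r, x⟫_ℝ = 0) : ∃ c : ℝ, c ≠ 0 ∧ c • x = crossVec b := by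
  set B := of (Fin.cons x.ofLp fun r => (b r).ofLp)
  have hxU : x ∈ (span ℝ (Set.range b))ᗮ := mem_orthogonal_span_iff.2 (Set.forall_mem_range.2 hx)
  have hzU : crossVec b ∈ (span ℝ (Set.range b))ᗮ := by
    refine mem_orthogonal_span_iff.2 (Set.forall_mem_range.2 fun r => ?_)
    simpa [PiLp.inner_apply, crossVec_eq_adjugate b x.ofLp, B, mul_comm] using
      sum_mul_adjugate_of_ne B (Fin.succ_ne_zero r)
  have hxz : ⟪x, crossVec b⟫_ℝ = B.det := by
    simp [det_eq_sum_mul_adjugate_row B 0, PiLp.inner_apply, crossVec_eq_adjugate b x.ofLp, B,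
      mul_comm]
  have hdet : B.det ≠ 0 := det_finCons_ne_zero hb fun h =>
    hx0 (inner_self_eq_zero.1 (inner_right_of_mem_orthogonal h hxU))
  obtain ⟨c, hc⟩ := exists_smul_eq_of_mem_orthogonal_span finrank_euclideanSpace_fin hb hxU hzU hx0
  refine ⟨c, ?_, hc⟩
  rintro rfl
  rw [← hc, zero_smul, inner_zero_right] at hxz
  exact hdet hxz.symm

end Determinants

section IntegerMatrix

variable {n m : ℕ}

def rowVec {ι : Type*} (B : Matrix ι (Fin m) ℤ) (i : ι) : EuclideanSpace ℝ (Fin m) :=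
  WithLp.toLp 2 fun j => (B i j : ℝ)

lemma inner_rowVec {ι : Type*} (B : Matrix ι (Fin m) ℤ) (i : ι) (y : EuclideanSpace ℝ (Fin m)) :
    ⟪rowVec B i, y⟫_ℝ = ∑ j, (B i j : ℝ) * y j := by
  simp [rowVec, PiLp.inner_apply, mul_comm]

lemma isNontrivialSolution_rowVec_iff (A : Matrix (Fin n) (Fin m) ℤ) (z : Fin m → ℤ) :
    IsNontrivialSolution (rowVec A) (WithLp.toLp 2 fun j => (z j : ℝ)) ↔
      (∀ i, ∑ j, A i j * z j ≤ 0) ∧ ∃ i, ∑ j, A i j * z j < 0 := by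
  simp only [IsNontrivialSolution, inner_rowVec]
  norm_cast

lemma sum_elim_rowVec_one (A : Matrix (Fin n) (Fin m) ℤ) :
    Sum.elim (rowVec A) (rowVec (1 : Matrix (Fin m) (Fin m) ℤ)) = rowVec (fromRows A 1) := by
  ext (i | j) <;> rfl

lemma span_range_rowVec_one :
    span ℝ (Set.range (rowVec (1 : Matrix (Fin m) (Fin m) ℤ))) = ⊤ := by
  have : rowVec (1 : Matrix (Fin m) (Fin m) ℤ) = EuclideanSpace.basisFun (Fin m) ℝ := by
    ext j c
    simp [rowVec, one_apply, eq_comm]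
  rw [this, ← OrthonormalBasis.coe_toBasis, Basis.span_eq]

lemma le_subdetBound (A : Matrix (Fin n) (Fin m) ℤ) {k K : ℕ} (hk : k ≤ K)
    {f : Fin k → Fin n} {g : Fin k → Fin m} (hf : Injective f) (hg : Injective g) :
    (A.submatrix f g).det.natAbs ≤ subdetBound A K :=
  Finset.le_sup_of_le (Finset.mem_range.2 (Nat.lt_succ_of_le hk))
    (Finset.le_sup_of_le (Finset.mem_univ (f, g)) (by simp [hf, hg]))

lemma natAbs_det_submatrix_fromRows_one_le (A : Matrix (Fin n) (Fin m) ℤ) {K : ℕ} :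
    ∀ {q : ℕ}, q ≤ K → ∀ (f : Fin q → Fin n ⊕ Fin m) {g : Fin q → Fin m}, Injective g →
      ((fromRows A 1).submatrix f g).det.natAbs ≤ subdetBound A K := by
  intro q
  induction q with
  | zero =>
    intro _ f g _
    simpa using le_subdetBound A (Nat.zero_le K) (f := Fin.elim0) (g := Fin.elim0)
      (fun a => a.elim0) (fun a => a.elim0)
  | succ q ih =>
    intro hq f g hg
    obtain ⟨r, j, hr⟩ | ⟨f', rfl⟩ : (∃ r j, f r = .inr j) ∨ ∃ f', f = Sum.inl ∘ f' := by
      simp_rw [← Sum.isRight_iff, or_iff_not_imp_left, not_exists, Bool.not_eq_true,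
        Sum.isRight_eq_false, Sum.isLeft_iff]
      intro hfr
      choose f' hf' using hfr
      exact ⟨f', funext hf'⟩
    · by_cases hj : ∃ c, g c = j
      · obtain ⟨c, rfl⟩ := hj
        rw [det_eq_of_row_eq_single _ (r := r) (c := c) ?_]
        · simpa [Int.natAbs_mul, Int.natAbs_pow] using
            ih (by omega) _ (hg.comp Fin.succAbove_right_injective)
        · ext c'
          simp [hr, one_apply, Pi.single_apply, hg.eq_iff, eq_comm]
      · rw [not_exists] at hj
        rw [det_eq_zero_of_row_eq_zero r fun c => by simp [hr, one_apply, Ne.symm (hj c)]]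
        exact Nat.zero_le _
    · by_cases hf' : Injective f'
      · exact le_subdetBound A hq hf' hg
      · obtain ⟨r₁, r₂, hf'r, hne⟩ := Function.not_injective_iff.1 hf'
        rw [det_zero_of_row_eq hne (by ext; simp [hf'r])]
        exact Nat.zero_le _

lemma crossVec_rowVec_fromRows_one (A : Matrix (Fin n) (Fin (m + 1)) ℤ)
    (R : Fin m → Fin n ⊕ Fin (m + 1)) (j : Fin (m + 1)) :
    crossVec (rowVec (fromRows A 1) ∘ R) j =
      (((fromRows A 1).submatrix (Fin.cons (Sum.inr j) R) id).det : ℝ) := by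
  rw [crossVec_eq_adjugate _ 0, adjugate_apply]
  change _ = Int.castRingHom ℝ _
  rw [RingHom.map_det]
  congr 1
  ext r c
  refine Fin.cases ?_ (fun r => ?_) r <;> simp [rowVec, one_apply, Pi.single_apply, eq_comm]

theorem exists_int_solution_of_linearIndependent (A : Matrix (Fin n) (Fin (m + 1)) ℤ)
    {x : EuclideanSpace ℝ (Fin (m + 1))} (hx : IsNontrivialSolution (rowVec A) x)
    (R : Fin m → Fin n ⊕ Fin (m + 1)) (hR : LinearIndependent ℝ (rowVec (fromRows A 1) ∘ R))
    (hRx : ∀ r, ⟪rowVec (fromRows A 1) (R r), x⟫_ℝ = 0) :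
    ∃ z : Fin (m + 1) → ℤ, (∀ i, ∑ j, A i j * z j ≤ 0) ∧ (∃ i, ∑ j, A i j * z j < 0) ∧
      ∀ j, (z j).natAbs ≤ subdetBound A m := by
  set z : Fin (m + 1) → ℤ := fun j => ((fromRows A 1).submatrix (Fin.cons (Sum.inr j) R) id).det
  have hz_le : ∀ j, (z j).natAbs ≤ subdetBound A m := fun j => by
    simp only [z]
    rw [det_eq_of_row_eq_single _ (r := 0) (c := j) (by ext c; simp [one_apply, Pi.single_apply, eq_comm])]
    simpa [Int.natAbs_mul, Int.natAbs_pow] using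
      natAbs_det_submatrix_fromRows_one_le A le_rfl R (Fin.succAbove_right_injective (p := j))
  have hz : crossVec (rowVec (fromRows A 1) ∘ R) = WithLp.toLp 2 fun j => (z j : ℝ) := by
    ext j
    exact crossVec_rowVec_fromRows_one A R j
  obtain ⟨c, hc0, hc⟩ := exists_smul_eq_crossVec hR hx.ne_zero hRx
  rw [hz] at hc
  rcases hc0.lt_or_gt with hneg | hpos
  · have hsol := (isNontrivialSolution_rowVec_iff A (-z)).1 <| by
      convert hx.smul (neg_pos.2 hneg) using 1
      rw [neg_smul, hc]
      ext j
      simp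
    exact ⟨-z, hsol.1, hsol.2, fun j => by simpa using hz_le j⟩
  · have hsol := (isNontrivialSolution_rowVec_iff A z).1 (hc ▸ hx.smul hpos)
    exact ⟨z, hsol.1, hsol.2, hz_le⟩

end IntegerMatrix

/-- If the homogeneous system `A x ≤ 0` with integral `A` has a nontrivial
real solution, then it has a nontrivial integer solution with coordinates bounded by
`q_{m-1}(A)`. -/
theorem stmt_19 {n m : ℕ} (A : Matrix (Fin n) (Fin m) ℤ)
    (x : Fin m → ℝ)
    (hx : ∀ i, ∑ j, (A i j : ℝ) * x j ≤ 0)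
    (hstrict : ∃ i, ∑ j, (A i j : ℝ) * x j < 0) :
    ∃ z : Fin m → ℤ,
      (∀ i, ∑ j, A i j * z j ≤ 0) ∧
      (∃ i, ∑ j, A i j * z j < 0) ∧
      (∀ j, (z j).natAbs ≤ subdetBound A (m - 1)) := by
  obtain _ | m := m
  · obtain ⟨i, hi⟩ := hstrict
    simp at hi
  have hx' : IsNontrivialSolution (rowVec A) (WithLp.toLp 2 x) := by
    simpa [IsNontrivialSolution, inner_rowVec] using ⟨hx, hstrict⟩
  obtain ⟨y, hy, hrank⟩ := hx'.exists_finrank_tightSpan span_range_rowVec_one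
  rw [finrank_euclideanSpace_fin, Nat.add_right_cancel_iff, sum_elim_rowVec_one] at hrank
  obtain ⟨R, hR, hRy⟩ := exists_linearIndependent_tight hrank
  simpa using exists_int_solution_of_linearIndependent A hy R hR hRy
end
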